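/- arXiv:2504.00108 — 8 statements merged into one kernel-verified Lean document; each statement's English description precedes it below -/
import Mathlib

section
/- Let n ≥ 1 and let p : Fin n → ℝ be nonnegative with average p̄ := (∑ a, p a)/n > 0. Let p* > 0 and 0 ≤ δ < 1, and let ε : Fin n → ℝ satisfy |ε a| ≤ δ for all a. Define f a := (Real.sqrt (p a) / Real.sqrt p*) · (1 + ε a). Then ∑ a, (f a)^2 > 0 and (∑ a, Real.sqrt (p a) · f a)^2 / (n · p̄ · ∑ a, (f a)^2) ≥ 1 − δ^2. -/
/-- Theorem 2 of the paper: infidelity of linear amplitude amplification (LAA by QSVT)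
for mixed-state post-selection, assuming multiplicative error `δ` in realizing the
transformation `x ↦ x/√p*`. -/
theorem stmt_0 (n : ℕ) (hn : 1 ≤ n) (p : Fin n → ℝ) (hp : ∀ a, 0 ≤ p a)
    (hpbar : 0 < (∑ a, p a) / n)
    (pstar : ℝ) (hpstar : 0 < pstar)
    (δ : ℝ) (hδ0 : 0 ≤ δ) (hδ1 : δ < 1)
    (ε : Fin n → ℝ) (hε : ∀ a, |ε a| ≤ δ)
    (f : Fin n → ℝ)
    (hf : ∀ a, f a = (Real.sqrt (p a) / Real.sqrt pstar) * (1 + ε a)) :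
    0 < ∑ a, (f a) ^ 2 ∧
      1 - δ ^ 2 ≤ (∑ a, Real.sqrt (p a) * f a) ^ 2 /
        (↑n * ((∑ a, p a) / n) * ∑ a, (f a) ^ 2) := by
  have hn0 : (0:ℝ) < n := by exact_mod_cast Nat.pos_of_ne_zero (by omega)
  set S := ∑ a, p a with hSdef
  set T := ∑ a, p a * (1 + ε a) with hTdef
  set Q := ∑ a, p a * (1 + ε a) ^ 2 with hQdef
  have hS : 0 < S := by
    have h := mul_pos hpbar hn0
    rwa [div_mul_cancel₀ _ (ne_of_gt hn0)] at h
  have hQ_ge : (1 - δ) ^ 2 * S ≤ Q := by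
    rw [hSdef, Finset.mul_sum, hQdef]
    apply Finset.sum_le_sum
    intro a _
    have h := abs_le.mp (hε a)
    nlinarith [mul_nonneg (hp a)
      (mul_nonneg (by linarith : (0:ℝ) ≤ ε a + δ) (by linarith : (0:ℝ) ≤ 2 + ε a - δ))]
  have hQpos : 0 < Q :=
    lt_of_lt_of_le (mul_pos (pow_pos (by linarith : (0:ℝ) < 1 - δ) 2) hS) hQ_ge
  have hQ_le : Q ≤ 2 * T - (1 - δ ^ 2) * S := by
    rw [hSdef, hTdef, hQdef, Finset.mul_sum, Finset.mul_sum, ← Finset.sum_sub_distrib]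
    apply Finset.sum_le_sum
    intro a _
    have h := abs_le.mp (hε a)
    nlinarith [mul_nonneg (hp a) (mul_nonneg (by linarith : (0:ℝ) ≤ δ - ε a) (by linarith : (0:ℝ) ≤ δ + ε a))]
  have key : (1 - δ ^ 2) * (S * Q) ≤ T ^ 2 := by
    have h1 : (0:ℝ) ≤ (1 - δ ^ 2) * S := mul_nonneg (by nlinarith) hS.le
    have h2 := mul_le_mul_of_nonneg_left hQ_le h1
    nlinarith [sq_nonneg (T - (1 - δ ^ 2) * S)]
  have hsp : 0 < Real.sqrt pstar := Real.sqrt_pos.mpr hpstar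
  have h1 : ∑ a, Real.sqrt (p a) * f a = T / Real.sqrt pstar := by
    rw [hTdef, Finset.sum_div]
    apply Finset.sum_congr rfl
    intro a _
    rw [hf a, show Real.sqrt (p a) * (Real.sqrt (p a) / Real.sqrt pstar * (1 + ε a))
        = Real.sqrt (p a) * Real.sqrt (p a) * (1 + ε a) / Real.sqrt pstar from by ring,
      Real.mul_self_sqrt (hp a)]
  have h2 : ∑ a, (f a) ^ 2 = Q / pstar := by
    rw [hQdef, Finset.sum_div]
    apply Finset.sum_congr rfl
    intro a _
    rw [hf a, show (Real.sqrt (p a) / Real.sqrt pstar * (1 + ε a)) ^ 2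
        = Real.sqrt (p a) ^ 2 * (1 + ε a) ^ 2 / Real.sqrt pstar ^ 2 from by ring,
      Real.sq_sqrt (hp a), Real.sq_sqrt hpstar.le]
  constructor
  · rw [h2]; exact div_pos hQpos hpstar
  · rw [h1, h2]
    have hnS : (n:ℝ) * (S / n) = S := by field_simp
    rw [hnS]
    have hsq : (T / Real.sqrt pstar) ^ 2 = T ^ 2 / pstar := by
      rw [div_pow, Real.sq_sqrt hpstar.le]
    rw [hsq]
    have heq : T ^ 2 / pstar / (S * (Q / pstar)) = T ^ 2 / (S * Q) := by
      field_simp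
    rw [heq, le_div_iff₀ (mul_pos hS hQpos)]
    linarith [key]
end

section
/- Let n ≥ 1 and let p : Fin n → ℝ satisfy p a > 0 for all a. Let p* > 0, 0 ≤ δ < 1, and let ε : Fin n → ℝ satisfy |ε a| ≤ δ for all a. Define f a := (Real.sqrt p* / Real.sqrt (p a)) · (1 + ε a). Then ∑ a, p a · (f a)^2 > 0 and (∑ a, Real.sqrt (p a) · f a)^2 / (n · ∑ a, p a · (f a)^2) ≥ 1 − δ^2. -/
/-- Theorem 3 of the paper: infidelity of the pseudoinverse decoder for
measurement-induced teleportation, assuming multiplicative error `δ` in realizing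
the transformation `x ↦ √p*/x`. -/
theorem stmt_1 (n : ℕ) (hn : 1 ≤ n) (p : Fin n → ℝ) (hp : ∀ a, 0 < p a)
    (pstar : ℝ) (hpstar : 0 < pstar)
    (δ : ℝ) (hδ0 : 0 ≤ δ) (hδ1 : δ < 1)
    (ε : Fin n → ℝ) (hε : ∀ a, |ε a| ≤ δ)
    (f : Fin n → ℝ)
    (hf : ∀ a, f a = (Real.sqrt pstar / Real.sqrt (p a)) * (1 + ε a)) :
    0 < ∑ a, p a * (f a) ^ 2 ∧
      1 - δ ^ 2 ≤ (∑ a, Real.sqrt (p a) * f a) ^ 2 /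
        (↑n * ∑ a, p a * (f a) ^ 2) := by
  have hx : ∀ a, 0 < 1 + ε a := by
    intro a
    have := (abs_le.mp (hε a)).1
    linarith
  have h1 : Real.sqrt pstar ^ 2 = pstar := Real.sq_sqrt hpstar.le
  have hpf : ∀ a, p a * (f a) ^ 2 = pstar * (1 + ε a) ^ 2 := by
    intro a
    have h2 : Real.sqrt (p a) ^ 2 = p a := Real.sq_sqrt (hp a).le
    rw [hf a, mul_pow, div_pow, h1, h2]
    field_simp
    rw [mul_comm, mul_div_assoc, div_self (hp a).ne', mul_one]
  have hsf : ∀ a, Real.sqrt (p a) * f a = Real.sqrt pstar * (1 + ε a) := by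
    intro a
    have hs0 : Real.sqrt (p a) ≠ 0 := by
      have := Real.sqrt_pos.mpr (hp a)
      linarith
    rw [hf a]
    field_simp
  set E : ℝ := ∑ a, ε a with hE
  set Q : ℝ := ∑ a, (ε a) ^ 2 with hQdef
  have hS1 : (∑ a, (1 + ε a)) = (n : ℝ) + E := by
    rw [Finset.sum_add_distrib]
    simp [hE]
  have hS2 : (∑ a, (1 + ε a) ^ 2) = (n : ℝ) + 2 * E + Q := by
    have : ∀ a, (1 + ε a) ^ 2 = 1 + 2 * ε a + (ε a) ^ 2 := by intro a; ring
    simp_rw [this]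
    rw [Finset.sum_add_distrib, Finset.sum_add_distrib, ← Finset.mul_sum]
    simp [hE, hQdef]
  have hQle : Q ≤ (n : ℝ) * δ ^ 2 := by
    have : Q ≤ ∑ _a : Fin n, δ ^ 2 := by
      apply Finset.sum_le_sum
      intro a _
      have := hε a
      nlinarith [abs_nonneg (ε a), sq_abs (ε a)]
    simpa using this
  have hS2pos : 0 < (n : ℝ) + 2 * E + Q := by
    rw [← hS2]
    apply Finset.sum_pos
    · intro a _
      exact pow_pos (hx a) 2
    · haveI : Nonempty (Fin n) := Fin.pos_iff_nonempty.mp hn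
      exact Finset.univ_nonempty
  have hsumpf : (∑ a, p a * (f a) ^ 2) = pstar * ((n : ℝ) + 2 * E + Q) := by
    rw [← hS2, Finset.mul_sum]
    exact Finset.sum_congr rfl fun a _ => hpf a
  have hsumsf : (∑ a, Real.sqrt (p a) * f a) = Real.sqrt pstar * ((n : ℝ) + E) := by
    rw [← hS1, Finset.mul_sum]
    exact Finset.sum_congr rfl fun a _ => hsf a
  have hnpos : (0 : ℝ) < n := by exact_mod_cast hn
  constructor
  · rw [hsumpf]
    positivity
  · rw [hsumpf, hsumsf, mul_pow, h1]
    rw [le_div_iff₀ (by positivity)]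
    have key : ((n : ℝ) + E) ^ 2 ≥ (1 - δ ^ 2) * ((n : ℝ) * ((n : ℝ) + 2 * E + Q)) := by
      nlinarith [sq_nonneg (E + (n : ℝ) * δ ^ 2), sq_nonneg δ, sq_nonneg ((n:ℝ) * δ)]
    nlinarith [key, sq_nonneg (Real.sqrt pstar)]
end

section
/- Let n ≥ 1 and let p : Fin n → ℝ be nonnegative with average p̄ := (∑ a, p a)/n > 0. Let 0 ≤ ε < 1 and α > 0, set p* := α·p̄, and let N := |{a : p a ≥ p*}|. Assume (n − N)/n ≤ ε (i.e. the fraction of indices with p a < p*, counted with the set {a : p a < α·p̄}, is at most ε). Define f a := Real.sqrt p* / Real.sqrt (p a) if p a ≥ p*, and f a := 0 otherwise. Then N > 0, (∑ a, Real.sqrt (p a) · f a)^2 / (n · ∑ a, p a · (f a)^2) = N/n ≥ 1 − ε, and the success probability (1/(n·p̄)) · ∑ a, p a · (f a)^2 = (p*/p̄)·(N/n) ≥ (1 − ε)·α. -/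
/-- Theorem 7 of the paper: tail bound for the success probability of the
pseudoinverse decoder. With `p̄` the average of the `p a`, `p* = α·p̄`,
`N = |{a : p a ≥ p*}|` and `f` the truncated inverse transformation,
if the fraction of indices with `p a < p*` is at most `ε < 1`, then `N > 0`,
the decoding fidelity equals `N/n ≥ 1 − ε`, and the success probability
`(1/(n·p̄))·∑ p a·(f a)² = (p*/p̄)·(N/n)` is at least `(1 − ε)·α`. -/
theorem stmt_3 (n : ℕ) (hn : 1 ≤ n) (p : Fin n → ℝ) (hp : ∀ a, 0 ≤ p a)
    (hpbar : 0 < (∑ a, p a) / n)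
    (ε α : ℝ) (hε0 : 0 ≤ ε) (hε1 : ε < 1) (hα : 0 < α)
    (pstar : ℝ) (hps : pstar = α * ((∑ a, p a) / n))
    (N : ℕ) (hN : N = (Finset.univ.filter (fun i => pstar ≤ p i)).card)
    (hfrac : ((n : ℝ) - N) / n ≤ ε)
    (f : Fin n → ℝ)
    (hf : ∀ a, f a = if pstar ≤ p a then Real.sqrt pstar / Real.sqrt (p a) else 0) :
    0 < N ∧
    (∑ a, Real.sqrt (p a) * f a) ^ 2 / (↑n * ∑ a, p a * (f a) ^ 2) = (N : ℝ) / n ∧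
    1 - ε ≤ (N : ℝ) / n ∧
    (1 / (n * ((∑ a, p a) / n))) * ∑ a, p a * (f a) ^ 2
      = (pstar / ((∑ a, p a) / n)) * ((N : ℝ) / n) ∧
    (1 - ε) * α ≤ (1 / (n * ((∑ a, p a) / n))) * ∑ a, p a * (f a) ^ 2 := by
  have hn' : (0:ℝ) < n := by positivity
  have hpstar : 0 < pstar := by rw [hps]; exact mul_pos hα hpbar
  -- N > 0
  have hNpos : 0 < N := by
    by_contra h
    push_neg at h
    interval_cases N
    simp only [Nat.cast_zero, sub_zero, div_self hn'.ne'] at hfrac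
    linarith
  have hNpos' : (0:ℝ) < N := by exact_mod_cast hNpos
  -- key sum computations
  have h1 : ∑ a, Real.sqrt (p a) * f a = N * Real.sqrt pstar := by
    have : ∀ a ∈ Finset.univ, Real.sqrt (p a) * f a
        = if pstar ≤ p a then Real.sqrt pstar else 0 := by
      intro a _
      rw [hf]
      split_ifs with h
      · have hpa : 0 < p a := lt_of_lt_of_le hpstar h
        have : Real.sqrt (p a) ≠ 0 := by positivity
        field_simp
      · exact mul_zero _
    rw [Finset.sum_congr rfl this, ← Finset.sum_filter, Finset.sum_const,
      nsmul_eq_mul, hN]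
  have h2 : ∑ a, p a * (f a) ^ 2 = N * pstar := by
    have : ∀ a ∈ Finset.univ, p a * (f a) ^ 2
        = if pstar ≤ p a then pstar else 0 := by
      intro a _
      rw [hf]
      split_ifs with h
      · have hpa : 0 < p a := lt_of_lt_of_le hpstar h
        rw [div_pow, Real.sq_sqrt hpstar.le, Real.sq_sqrt hpa.le]
        field_simp
      · simp
    rw [Finset.sum_congr rfl this, ← Finset.sum_filter, Finset.sum_const,
      nsmul_eq_mul, hN]
  have hsum : (0:ℝ) < ∑ a, p a := by
    have := mul_pos hpbar hn'
    rwa [div_mul_cancel₀ _ hn'.ne'] at this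
  have h3 : 1 - ε ≤ (N : ℝ) / n := by
    rw [div_le_iff₀ hn'] at hfrac
    rw [le_div_iff₀ hn']
    nlinarith
  refine ⟨hNpos, ?_, h3, ?_, ?_⟩
  · rw [h1, h2]
    rw [mul_pow, Real.sq_sqrt hpstar.le]
    field_simp
  · rw [h2]
    field_simp [hsum.ne', hn'.ne']
  · rw [h2]
    have heq : (1 / ((n:ℝ) * ((∑ a, p a) / n))) * ((N:ℝ) * pstar)
        = α * ((N : ℝ) / n) := by
      rw [hps]
      field_simp [hsum.ne', hn'.ne']
    rw [heq, mul_comm (1-ε) α]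
    exact mul_le_mul_of_nonneg_left h3 hα.le
end

section
/- Let n ≥ 1 and let p : Fin n → ℝ be nonnegative with average p̄ := (∑ a, p a)/n > 0. Let 0 < ε < 1 and 0 ≤ ε′ < ε, and suppose (1/(2n)) · ∑ a, |p a/p̄ − 1| ≤ ε′. Set α := 1 − ε′/ε and p* := α·p̄. Then |{a : p a ≥ p*}|/n ≥ 1 − ε and α · |{a : p a ≥ p*}|/n ≥ (1 − ε′/ε)·(1 − ε). -/
/-- Corollary 8 of the paper: success probability of the pseudoinverse decoder for
approximate quantum error correcting codes. Under the approximate decoupling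
condition `(1/(2n))·∑ |p a/p̄ − 1| ≤ ε′` with `0 ≤ ε′ < ε < 1`, setting
`α = 1 − ε′/ε` and `p* = α·p̄`, the decoding fidelity `|{a : p a ≥ p*}|/n` is at
least `1 − ε` and the success probability `α·|{a : p a ≥ p*}|/n` is at least
`(1 − ε′/ε)·(1 − ε)`. -/
theorem stmt_5 (n : ℕ) (hn : 1 ≤ n) (p : Fin n → ℝ) (hp : ∀ a, 0 ≤ p a)
    (hpbar : 0 < (∑ a, p a) / n)
    (ε ε' : ℝ) (hε0 : 0 < ε) (hε1 : ε < 1) (hε'0 : 0 ≤ ε') (hε'ε : ε' < ε)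
    (hdev : (1 / (2 * n)) * ∑ a, |p a / ((∑ i, p i) / n) - 1| ≤ ε')
    (α : ℝ) (hα : α = 1 - ε' / ε)
    (pstar : ℝ) (hps : pstar = α * ((∑ a, p a) / n)) :
    1 - ε ≤ ((Finset.univ.filter (fun i => pstar ≤ p i)).card : ℝ) / n ∧
    (1 - ε' / ε) * (1 - ε)
      ≤ α * (((Finset.univ.filter (fun i => pstar ≤ p i)).card : ℝ) / n) := by
  have hn0 : (0:ℝ) < n := by exact_mod_cast Nat.lt_of_lt_of_le Nat.zero_lt_one hn
  set S : ℝ := ∑ a, p a with hS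
  have hS0 : 0 < S := by
    have := mul_pos hpbar hn0
    rwa [div_mul_cancel₀ _ (ne_of_gt hn0)] at this
  set pbar : ℝ := S / n with hpb
  have hpb0 : 0 < pbar := hpbar
  -- sum of ratios is n
  have hrsum : ∑ a, p a / pbar = n := by
    rw [← Finset.sum_div, ← hS, hpb]
    field_simp
  have hdev' : ∑ a, |p a / pbar - 1| ≤ 2 * n * ε' := by
    have h2n : (0:ℝ) < 2 * n := by linarith
    calc ∑ a, |p a / pbar - 1| = (2*n) * ((1/(2*n)) * ∑ a, |p a / pbar - 1|) := by
          field_simp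
      _ ≤ (2*n) * ε' := by
          apply mul_le_mul_of_nonneg_left _ (le_of_lt h2n)
          exact hdev
      _ = 2 * n * ε' := by ring
  set G := Finset.univ.filter (fun i => pstar ≤ p i) with hG
  set B := Finset.univ.filter (fun i => ¬ pstar ≤ p i) with hB
  have hcard : G.card + B.card = n := by
    rw [hG, hB, Finset.card_filter_add_card_filter_not]
    simp
  have hBcard : (B.card : ℝ) ≤ n * ε := by
    rcases eq_or_lt_of_le hε'0 with h0 | h0
    · -- ε' = 0 : all p a = pbar, B empty
      have hall : ∀ a, p a / pbar - 1 = 0 := by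
        intro a
        have hsum0 : ∑ a, |p a / pbar - 1| ≤ 0 := by
          nlinarith [hdev', h0.symm]
        have hnn : ∀ a ∈ Finset.univ, (0:ℝ) ≤ |p a / pbar - 1| := fun a _ => abs_nonneg _
        have := Finset.single_le_sum hnn (Finset.mem_univ a)
        have : |p a / pbar - 1| = 0 := le_antisymm (le_trans this hsum0) (abs_nonneg _)
        exact abs_eq_zero.mp this
      have hBempty : B = ∅ := by
        rw [hB, Finset.filter_eq_empty_iff]
        intro a _
        push_neg
        have := hall a
        have hpa : p a = pbar := by field_simp at this; linarith
        have hα1 : α = 1 := by rw [hα, ← h0]; simp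
        rw [hps, hα1, one_mul, hpa]
      rw [hBempty]
      simp
      positivity
    · -- ε' > 0
      have hsumneg : ∑ a, max (1 - p a / pbar) 0 ≤ n * ε' := by
        have key : ∀ x : ℝ, max x 0 = (x + |x|) / 2 := by
          intro x
          rcases le_total x 0 with h | h
          · rw [max_eq_right h, abs_of_nonpos h]; ring
          · rw [max_eq_left h, abs_of_nonneg h]; ring
        calc ∑ a, max (1 - p a / pbar) 0
            = ∑ a, ((1 - p a / pbar) + |1 - p a / pbar|) / 2 := by
              simp_rw [key]
          _ = ((∑ a, (1 - p a / pbar)) + ∑ a, |p a / pbar - 1|) / 2 := by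
              rw [← Finset.sum_add_distrib, ← Finset.sum_div]
              congr 1
              apply Finset.sum_congr rfl
              intro a _
              rw [abs_sub_comm]
          _ ≤ (0 + 2 * n * ε') / 2 := by
              apply div_le_div_of_nonneg_right _ (by norm_num)
              apply add_le_add _ hdev'
              rw [Finset.sum_sub_distrib, hrsum]
              simp
          _ = n * ε' := by ring
      have hlb : (B.card : ℝ) * (ε'/ε) ≤ ∑ a, max (1 - p a / pbar) 0 := by
        calc (B.card : ℝ) * (ε'/ε) = ∑ _a ∈ B, (ε'/ε) := by
              rw [Finset.sum_const, nsmul_eq_mul]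
          _ ≤ ∑ a ∈ B, max (1 - p a / pbar) 0 := by
              apply Finset.sum_le_sum
              intro a ha
              rw [hB, Finset.mem_filter] at ha
              have hpa : p a < pstar := lt_of_not_ge ha.2
              have : p a / pbar < α := by
                rw [hps] at hpa
                exact (div_lt_iff₀ hpb0).mpr hpa
              have : ε'/ε < 1 - p a / pbar := by rw [hα] at this; linarith
              exact le_trans (le_of_lt this) (le_max_left _ _)
          _ ≤ ∑ a, max (1 - p a / pbar) 0 := by
              apply Finset.sum_le_sum_of_subset_of_nonneg (Finset.subset_univ B)
              intro a _ _
              exact le_max_right _ _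
      have hεε'0 : 0 < ε'/ε := div_pos h0 hε0
      have := le_trans hlb hsumneg
      rw [← le_div_iff₀ hεε'0] at this
      calc (B.card : ℝ) ≤ (n * ε') / (ε'/ε) := this
        _ = n * ε := by field_simp
  have hGn : (G.card : ℝ) = n - B.card := by
    have : (G.card : ℝ) + B.card = n := by exact_mod_cast hcard
    linarith
  have h1 : 1 - ε ≤ (G.card : ℝ) / n := by
    rw [le_div_iff₀ hn0, hGn]
    nlinarith
  refine ⟨h1, ?_⟩
  rw [hα]
  have hα0 : 0 ≤ 1 - ε'/ε := by
    have : ε'/ε < 1 := (div_lt_one hε0).mpr hε'ε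
    linarith
  exact mul_le_mul_of_nonneg_left h1 hα0
end

section
/- Let N ≥ 1 and let q : Fin N → ℝ be nonnegative with ∑ m, q m = 1. Let O : Fin N → ℝ with |O m| ≤ 1 for all m, let p* > 0 and 0 ≤ δ ≤ 1, and let P : Fin N → ℝ satisfy |P m| ≤ 1 for all m and P m ≥ 1 − δ for every m with q m ≥ p*. Then |∑ m, q m · O m − ∑ m, q m · (P m)^2 · O m| ≤ 2·δ·(∑_{m : q m ≥ p*} q m) + ∑_{m : q m < p*} q m. -/
/-- The sampling-bias bound of Section IV of the paper for the
post-selection-free experimental protocol: with outcome probabilities `q m`,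
bounded trajectory observables `O m`, and FPAA polynomial values `P m` with
`|P m| ≤ 1` and `P m ≥ 1 − δ` whenever `q m ≥ p*`, the bias of the estimator is
bounded by `2δ·∑_{q m ≥ p*} q m + ∑_{q m < p*} q m`. -/
theorem stmt_7 (N : ℕ) (hN : 1 ≤ N) (q : Fin N → ℝ) (hq : ∀ m, 0 ≤ q m)
    (hsum : ∑ m, q m = 1)
    (O : Fin N → ℝ) (hO : ∀ m, |O m| ≤ 1)
    (pstar : ℝ) (hps : 0 < pstar)
    (δ : ℝ) (hδ0 : 0 ≤ δ) (hδ1 : δ ≤ 1)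
    (P : Fin N → ℝ) (hP : ∀ m, |P m| ≤ 1)
    (hPgood : ∀ m, pstar ≤ q m → 1 - δ ≤ P m) :
    |∑ m, q m * O m - ∑ m, q m * (P m) ^ 2 * O m|
      ≤ 2 * δ * (∑ m ∈ Finset.univ.filter (fun i => pstar ≤ q i), q m)
        + ∑ m ∈ Finset.univ.filter (fun i => q i < pstar), q m := by
  have key : ∀ m, |q m * O m - q m * (P m) ^ 2 * O m| ≤ q m * (1 - (P m) ^ 2) := by
    intro m
    have h1 : q m * O m - q m * (P m) ^ 2 * O m = q m * (1 - (P m) ^ 2) * O m := by ring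
    rw [h1, abs_mul]
    have hP2 : (P m) ^ 2 ≤ 1 := by
      have := sq_abs (P m) ▸ pow_le_one₀ (abs_nonneg _) (hP m)
      simpa [sq_abs] using this
    have hnn : 0 ≤ q m * (1 - (P m) ^ 2) := mul_nonneg (hq m) (by linarith)
    rw [abs_of_nonneg hnn]
    nlinarith [hO m, abs_nonneg (O m)]
  have habs : |∑ m, q m * O m - ∑ m, q m * (P m) ^ 2 * O m|
      ≤ ∑ m, q m * (1 - (P m) ^ 2) := by
    rw [← Finset.sum_sub_distrib]
    exact (Finset.abs_sum_le_sum_abs _ _).trans (Finset.sum_le_sum fun m _ => key m)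
  refine habs.trans ?_
  rw [← Finset.sum_filter_add_sum_filter_not Finset.univ (fun i => pstar ≤ q i)]
  have hgood : ∑ m ∈ Finset.univ.filter (fun i => pstar ≤ q i), q m * (1 - (P m) ^ 2)
      ≤ 2 * δ * ∑ m ∈ Finset.univ.filter (fun i => pstar ≤ q i), q m := by
    rw [Finset.mul_sum]
    refine Finset.sum_le_sum fun m hm => ?_
    have hm' : pstar ≤ q m := by simpa using hm
    have hPm := hPgood m hm'
    have hPm1 : P m ≤ 1 := (abs_le.mp (hP m)).2
    have : 1 - (P m) ^ 2 ≤ 2 * δ := by nlinarith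
    calc q m * (1 - (P m) ^ 2) ≤ q m * (2 * δ) :=
          mul_le_mul_of_nonneg_left this (hq m)
      _ = 2 * δ * q m := by ring
  have hbad : ∑ m ∈ Finset.univ.filter (fun i => ¬ pstar ≤ q i), q m * (1 - (P m) ^ 2)
      ≤ ∑ m ∈ Finset.univ.filter (fun i => q i < pstar), q m := by
    have heq : Finset.univ.filter (fun i => ¬ pstar ≤ q i)
        = Finset.univ.filter (fun i => q i < pstar) := by
      apply Finset.filter_congr; intro i _; simp [not_le]
    rw [heq]
    refine Finset.sum_le_sum fun m _ => ?_
    have hP2 : 0 ≤ (P m) ^ 2 := sq_nonneg _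
    nlinarith [hq m]
  linarith
end

section
/- Let D ≥ 2 and let M = Matrix.fromBlocks A B C Q be a D×D complex matrix with blocks A of size 1×1, B of size 1×(D−1), C of size (D−1)×1 and Q of size (D−1)×(D−1). Let μ be the normalized Haar probability measure on the unitary group U(D−1). For g ∈ U(D−1) set B_g := Matrix.fromBlocks 1 0 0 (g : Matrix (Fin (D−1)) (Fin (D−1)) ℂ). Then ∫ g, B_g * M * (star (B_g)) ∂μ = Matrix.fromBlocks A 0 0 (((Matrix.trace Q)/(D−1)) • 1). -/
open MeasureTheory

attribute [local instance] Matrix.normedAddCommGroup Matrix.normedSpace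

/-- The unitary group carries the Borel σ-algebra of its (subspace) topology. -/
noncomputable local instance (n : ℕ) :
    MeasurableSpace (Matrix.unitaryGroup (Fin n) ℂ) := borel _


local instance (n : ℕ) : BorelSpace (Matrix.unitaryGroup (Fin n) ℂ) := ⟨rfl⟩

local instance (n : ℕ) : SecondCountableTopology (Matrix.unitaryGroup (Fin n) ℂ) :=
  @TopologicalSpace.Subtype.secondCountableTopology _ _ _ (inferInstanceAs (SecondCountableTopology (Fin n → Fin n → ℂ)))

noncomputable local instance (m n : Type*) [Fintype m] [Fintype n] : ContinuousENorm (Matrix m n ℂ) :=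
  SeminormedAddGroup.toContinuousENorm

lemma ug_entry_le {n : ℕ} (g : Matrix.unitaryGroup (Fin n) ℂ) (i j : Fin n) :
    ‖(g : Matrix (Fin n) (Fin n) ℂ) i j‖ ≤ 1 := by
  have h1 : ((g : Matrix (Fin n) (Fin n) ℂ) * star (g : Matrix (Fin n) (Fin n) ℂ)) i i = 1 := by
    rw [Unitary.mul_star_self_of_mem g.2]
    simp [Matrix.one_apply]
  have h2 : ((∑ k, Complex.normSq ((g : Matrix (Fin n) (Fin n) ℂ) i k) : ℝ) : ℂ) = 1 := by
    rw [← h1, Matrix.mul_apply]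
    push_cast
    refine Finset.sum_congr rfl fun k _ => ?_
    simp [Matrix.star_apply, Complex.mul_conj]
  have h3 : ∑ k, Complex.normSq ((g : Matrix (Fin n) (Fin n) ℂ) i k) = 1 := by
    exact_mod_cast h2
  have h4 : Complex.normSq ((g : Matrix (Fin n) (Fin n) ℂ) i j) ≤ 1 := by
    rw [← h3]
    exact Finset.single_le_sum (fun k _ => Complex.normSq_nonneg _) (Finset.mem_univ j)
  have h5 : ‖(g : Matrix (Fin n) (Fin n) ℂ) i j‖ ^ 2 ≤ 1 := by
    rwa [Complex.sq_norm]
  nlinarith [norm_nonneg ((g : Matrix (Fin n) (Fin n) ℂ) i j)]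

lemma ug_continuous_coe {n : ℕ} :
    Continuous (fun g : Matrix.unitaryGroup (Fin n) ℂ => (g : Matrix (Fin n) (Fin n) ℂ)) :=
  continuous_subtype_val

instance ug_compact (n : ℕ) : CompactSpace (Matrix.unitaryGroup (Fin n) ℂ) := by
  haveI : ProperSpace (Matrix (Fin n) (Fin n) ℂ) := FiniteDimensional.proper ℂ _
  have hcpt : IsCompact ((Matrix.unitaryGroup (Fin n) ℂ) : Set (Matrix (Fin n) (Fin n) ℂ)) := by
    apply Metric.isCompact_of_isClosed_isBounded
    · have hset : ((Matrix.unitaryGroup (Fin n) ℂ) : Set (Matrix (Fin n) (Fin n) ℂ))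
          = (fun A : Matrix (Fin n) (Fin n) ℂ => A * star A) ⁻¹' {1} := by
        ext A
        simp [Matrix.mem_unitaryGroup_iff]
      rw [hset]
      exact IsClosed.preimage (continuous_id.matrix_mul continuous_star) isClosed_singleton
    · apply Bornology.IsBounded.subset (Metric.isBounded_closedBall (x := 0) (r := 1))
      intro A hA
      simp only [Metric.mem_closedBall, dist_zero_right]
      rw [Matrix.norm_le_iff zero_le_one]
      intro i j
      exact ug_entry_le ⟨A, hA⟩ i j
  exact isCompact_iff_compactSpace.mp hcpt

section helpers
variable {n : ℕ} {E F : Type*}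

lemma cont_integrable [NormedAddCommGroup E] [NormedSpace ℝ E]
    {f : Matrix.unitaryGroup (Fin n) ℂ → E} (hf : Continuous f)
    (μ : Measure (Matrix.unitaryGroup (Fin n) ℂ)) [IsFiniteMeasure μ] :
    Integrable f μ :=
  hf.integrable_of_hasCompactSupport
    (isCompact_univ.of_isClosed_subset (isClosed_tsupport f) (Set.subset_univ _))

lemma lin_int {α : Type*} [MeasurableSpace α] (μ : Measure α)
    [NormedAddCommGroup E] [NormedSpace ℂ E] [FiniteDimensional ℂ E]
    [NormedAddCommGroup F] [NormedSpace ℂ F] [FiniteDimensional ℂ F]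
    (L : E →ₗ[ℂ] F) {f : α → E} (hf : Integrable f μ) :
    L (∫ x, f x ∂μ) = ∫ x, L (f x) ∂μ := by
  have := (LinearMap.toContinuousLinearMap L).integral_comp_comm hf
  simpa using this.symm

lemma int_shift [NormedAddCommGroup E] [NormedSpace ℝ E]
    (μ : Measure (Matrix.unitaryGroup (Fin n) ℂ))
    (hinv : ∀ g : Matrix.unitaryGroup (Fin n) ℂ,
      Measure.map (fun x => g * x) μ = μ)
    {f : Matrix.unitaryGroup (Fin n) ℂ → E} (hf : Continuous f)
    (h : Matrix.unitaryGroup (Fin n) ℂ) :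
    ∫ x, f x ∂μ = ∫ x, f (h * x) ∂μ := by
  have hc : Continuous (fun x : Matrix.unitaryGroup (Fin n) ℂ => h * x) := by
    apply continuous_induced_rng.mpr
    exact continuous_const.matrix_mul continuous_subtype_val
  conv_lhs => rw [← hinv h]
  rw [integral_map hc.aemeasurable]
  exact hf.aestronglyMeasurable

end helpers

section keys
open scoped Matrix
variable {n : ℕ}

noncomputable def negOne (n : ℕ) : Matrix.unitaryGroup (Fin n) ℂ :=
  ⟨-1, by rw [Matrix.mem_unitaryGroup_iff]; simp⟩

lemma avg_mul_right (μ : Measure (Matrix.unitaryGroup (Fin n) ℂ)) [IsProbabilityMeasure μ]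
    (hinv : ∀ g : Matrix.unitaryGroup (Fin n) ℂ, Measure.map (fun x => g * x) μ = μ)
    (C : Matrix (Fin n) (Fin 1) ℂ) :
    ∫ g : Matrix.unitaryGroup (Fin n) ℂ, ((g : Matrix (Fin n) (Fin n) ℂ) * C) ∂μ = 0 := by
  have hcont : Continuous (fun g : Matrix.unitaryGroup (Fin n) ℂ =>
      (g : Matrix (Fin n) (Fin n) ℂ) * C) :=
    continuous_subtype_val.matrix_mul continuous_const
  have h1 := int_shift μ hinv hcont (negOne n)
  have h2 : ∀ x : Matrix.unitaryGroup (Fin n) ℂ,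
      ((negOne n * x : Matrix.unitaryGroup (Fin n) ℂ) : Matrix (Fin n) (Fin n) ℂ) * C
        = -(((x : Matrix (Fin n) (Fin n) ℂ)) * C) := by
    intro x
    have hx : ((negOne n * x : Matrix.unitaryGroup (Fin n) ℂ) : Matrix (Fin n) (Fin n) ℂ)
        = -(x : Matrix (Fin n) (Fin n) ℂ) := by
      show (-1 : Matrix (Fin n) (Fin n) ℂ) * (x : Matrix (Fin n) (Fin n) ℂ) = _
      rw [neg_one_mul]
    rw [hx, Matrix.neg_mul]
  simp only [h2, integral_neg] at h1
  have : (2 : ℂ) • (∫ g : Matrix.unitaryGroup (Fin n) ℂ,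
      ((g : Matrix (Fin n) (Fin n) ℂ) * C) ∂μ) = 0 := by
    rw [two_smul]
    nth_rewrite 2 [h1]
    simp
  simpa using this

lemma avg_mul_left (μ : Measure (Matrix.unitaryGroup (Fin n) ℂ)) [IsProbabilityMeasure μ]
    (hinv : ∀ g : Matrix.unitaryGroup (Fin n) ℂ, Measure.map (fun x => g * x) μ = μ)
    (B : Matrix (Fin 1) (Fin n) ℂ) :
    ∫ g : Matrix.unitaryGroup (Fin n) ℂ, (B * (g : Matrix (Fin n) (Fin n) ℂ)ᴴ) ∂μ = 0 := by
  have hcont : Continuous (fun g : Matrix.unitaryGroup (Fin n) ℂ =>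
      B * (g : Matrix (Fin n) (Fin n) ℂ)ᴴ) :=
    continuous_const.matrix_mul continuous_subtype_val.matrix_conjTranspose
  have h1 := int_shift μ hinv hcont (negOne n)
  have h2 : ∀ x : Matrix.unitaryGroup (Fin n) ℂ,
      B * ((negOne n * x : Matrix.unitaryGroup (Fin n) ℂ) : Matrix (Fin n) (Fin n) ℂ)ᴴ
        = -(B * ((x : Matrix (Fin n) (Fin n) ℂ))ᴴ) := by
    intro x
    have hx : ((negOne n * x : Matrix.unitaryGroup (Fin n) ℂ) : Matrix (Fin n) (Fin n) ℂ)
        = -(x : Matrix (Fin n) (Fin n) ℂ) := by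
      show (-1 : Matrix (Fin n) (Fin n) ℂ) * (x : Matrix (Fin n) (Fin n) ℂ) = _
      rw [neg_one_mul]
    rw [hx, Matrix.conjTranspose_neg, Matrix.mul_neg]
  simp only [h2, integral_neg] at h1
  have : (2 : ℂ) • (∫ g : Matrix.unitaryGroup (Fin n) ℂ,
      (B * (g : Matrix (Fin n) (Fin n) ℂ)ᴴ) ∂μ) = 0 := by
    rw [two_smul]
    nth_rewrite 2 [h1]
    simp
  simpa using this

end keys

section conj
open scoped Matrix
variable {n : ℕ}

lemma avg_conj (hn : 0 < n) (μ : Measure (Matrix.unitaryGroup (Fin n) ℂ)) [IsProbabilityMeasure μ]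
    (hinv : ∀ g : Matrix.unitaryGroup (Fin n) ℂ, Measure.map (fun x => g * x) μ = μ)
    (Q : Matrix (Fin n) (Fin n) ℂ) :
    ∫ g : Matrix.unitaryGroup (Fin n) ℂ,
        ((g : Matrix (Fin n) (Fin n) ℂ) * Q * (g : Matrix (Fin n) (Fin n) ℂ)ᴴ) ∂μ
      = ((Matrix.trace Q) / (n : ℂ)) • (1 : Matrix (Fin n) (Fin n) ℂ) := by
  set f : Matrix.unitaryGroup (Fin n) ℂ → Matrix (Fin n) (Fin n) ℂ :=
    fun g => (g : Matrix (Fin n) (Fin n) ℂ) * Q * (g : Matrix (Fin n) (Fin n) ℂ)ᴴ with hf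
  have hcont : Continuous f :=
    (continuous_subtype_val.matrix_mul continuous_const).matrix_mul
      continuous_subtype_val.matrix_conjTranspose
  have hint : Integrable f μ := cont_integrable hcont μ
  set T : Matrix (Fin n) (Fin n) ℂ := ∫ g, f g ∂μ with hT
  -- T commutes with every unitary
  have hcomm : ∀ h : Matrix.unitaryGroup (Fin n) ℂ,
      (h : Matrix (Fin n) (Fin n) ℂ) * T = T * (h : Matrix (Fin n) (Fin n) ℂ) := by
    intro h
    have h1 := int_shift μ hinv hcont h
    have L : Matrix (Fin n) (Fin n) ℂ →ₗ[ℂ] Matrix (Fin n) (Fin n) ℂ :=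
      (LinearMap.mulRight ℂ ((h : Matrix (Fin n) (Fin n) ℂ)ᴴ)).comp
        (LinearMap.mulLeft ℂ (h : Matrix (Fin n) (Fin n) ℂ))
    have h2 : ∀ x : Matrix.unitaryGroup (Fin n) ℂ, f (h * x)
        = (h : Matrix (Fin n) (Fin n) ℂ) * f x * (h : Matrix (Fin n) (Fin n) ℂ)ᴴ := by
      intro x
      have hx : ((h * x : Matrix.unitaryGroup (Fin n) ℂ) : Matrix (Fin n) (Fin n) ℂ)
          = (h : Matrix (Fin n) (Fin n) ℂ) * (x : Matrix (Fin n) (Fin n) ℂ) := rfl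
      simp only [hf, hx, Matrix.conjTranspose_mul]
      noncomm_ring
    have h3 : T = (h : Matrix (Fin n) (Fin n) ℂ) * T * (h : Matrix (Fin n) (Fin n) ℂ)ᴴ := by
      have h4 := ((LinearMap.mulRight ℂ ((h : Matrix (Fin n) (Fin n) ℂ)ᴴ)).comp
        (LinearMap.mulLeft ℂ (h : Matrix (Fin n) (Fin n) ℂ))).congr_arg (hT.symm)
      calc T = ∫ x, f (h * x) ∂μ := h1
        _ = ∫ x, (h : Matrix (Fin n) (Fin n) ℂ) * f x * (h : Matrix (Fin n) (Fin n) ℂ)ᴴ ∂μ := by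
              simp only [h2]
        _ = (h : Matrix (Fin n) (Fin n) ℂ) * T * (h : Matrix (Fin n) (Fin n) ℂ)ᴴ := by
              have h5 := lin_int μ ((LinearMap.mulRight ℂ ((h : Matrix (Fin n) (Fin n) ℂ)ᴴ)).comp
                (LinearMap.mulLeft ℂ (h : Matrix (Fin n) (Fin n) ℂ))) hint
              simp only [LinearMap.coe_comp, Function.comp_apply, LinearMap.mulLeft_apply,
                LinearMap.mulRight_apply] at h5
              exact h5.symm
    have h6 : (h : Matrix (Fin n) (Fin n) ℂ)ᴴ * (h : Matrix (Fin n) (Fin n) ℂ) = 1 := by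
      have := Unitary.star_mul_self_of_mem h.2
      rwa [Matrix.star_eq_conjTranspose] at this
    calc (h : Matrix (Fin n) (Fin n) ℂ) * T
        = (h : Matrix (Fin n) (Fin n) ℂ) * T * ((h : Matrix (Fin n) (Fin n) ℂ)ᴴ
            * (h : Matrix (Fin n) (Fin n) ℂ)) := by rw [h6, Matrix.mul_one]
      _ = ((h : Matrix (Fin n) (Fin n) ℂ) * T * (h : Matrix (Fin n) (Fin n) ℂ)ᴴ)
            * (h : Matrix (Fin n) (Fin n) ℂ) := by noncomm_ring
      _ = T * (h : Matrix (Fin n) (Fin n) ℂ) := by rw [← h3]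
  -- off-diagonal entries vanish
  have hoff : ∀ i j : Fin n, i ≠ j → T i j = 0 := by
    intro i j hij
    set d : Matrix (Fin n) (Fin n) ℂ :=
      Matrix.diagonal (fun k => if k = i then (-1 : ℂ) else 1) with hd
    have hdmem : d ∈ Matrix.unitaryGroup (Fin n) ℂ := by
      rw [Matrix.mem_unitaryGroup_iff, Matrix.star_eq_conjTranspose, hd,
        Matrix.diagonal_conjTranspose, Matrix.diagonal_mul_diagonal]
      ext a b
      by_cases hab : a = b
      · subst hab
        by_cases hai : a = i <;>
          simp [Matrix.diagonal_apply_eq, Matrix.one_apply, hai, Pi.star_apply]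
      · simp [Matrix.diagonal_apply_ne _ hab, Matrix.one_apply, hab]
    have hc := hcomm ⟨d, hdmem⟩
    have he := congrFun (congrFun hc i) j
    simp only [Matrix.diagonal_mul, Matrix.mul_diagonal, hd] at he
    simp only [if_pos rfl, if_neg (Ne.symm hij)] at he
    -- he : -1 * T i j = T i j * 1
    have : (-1 : ℂ) * T i j = T i j * 1 := he
    have h2 : (2 : ℂ) * T i j = 0 := by ring_nf; ring_nf at this; linear_combination -this
    simpa using h2
  -- diagonal entries are all equal
  have hdiag : ∀ i j : Fin n, T i i = T j j := by
    intro i j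
    by_cases hij : i = j
    · rw [hij]
    · set σ : Equiv.Perm (Fin n) := Equiv.swap i j with hσ
      set P : Matrix (Fin n) (Fin n) ℂ := σ.permMatrix ℂ with hP
      have hPt : Pᴴ = (σ⁻¹).permMatrix ℂ := by
        rw [hP]
        ext a b
        simp only [Matrix.conjTranspose_apply, Equiv.Perm.permMatrix, PEquiv.toMatrix_apply,
          Equiv.toPEquiv_apply, Option.mem_def, Option.some.injEq]
        rw [apply_ite (star : ℂ → ℂ)]
        simp only [star_one, star_zero]
        congr 1
        · simp only [eq_iff_iff]
          constructor
          · intro hh; rw [← hh]; simp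
          · intro hh; rw [← hh]; simp
      have hPmem : P ∈ Matrix.unitaryGroup (Fin n) ℂ := by
        rw [Matrix.mem_unitaryGroup_iff, Matrix.star_eq_conjTranspose, hPt, hP]
        have : (σ.permMatrix ℂ) * ((σ⁻¹).permMatrix ℂ) = ((σ⁻¹ * σ).permMatrix ℂ) := by
          simp only [Equiv.Perm.permMatrix]
          rw [← PEquiv.toMatrix_trans, ← Equiv.toPEquiv_trans]
          rfl
        rw [this, inv_mul_cancel]
        show ((Equiv.refl (Fin n)).toPEquiv.toMatrix : Matrix (Fin n) (Fin n) ℂ) = 1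
        rw [Equiv.toPEquiv_refl, PEquiv.toMatrix_refl]
      have hc := hcomm ⟨P, hPmem⟩
      have hc' : P * T = T * P := hc
      have hL : P * T = T.submatrix σ id := by
        rw [hP]; exact PEquiv.toMatrix_toPEquiv_mul σ T
      have hR : T * P = T.submatrix id σ.symm := by
        rw [hP]; exact (PEquiv.mul_toMatrix_toPEquiv T σ)
      have he := congrFun (congrFun (hL ▸ hR ▸ hc') i) j
      simp only [Matrix.submatrix_apply, id_eq] at he
      rw [hσ] at he
      simpa [Equiv.swap_apply_left, Equiv.swap_apply_right] using he.symm
  -- trace of T equals trace of Q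
  have htr : Matrix.trace T = Matrix.trace Q := by
    have h5 := lin_int μ (Matrix.traceLinearMap (Fin n) ℂ ℂ) hint
    simp only [Matrix.traceLinearMap_apply] at h5
    rw [hT, h5]
    have : ∀ g : Matrix.unitaryGroup (Fin n) ℂ, Matrix.trace (f g) = Matrix.trace Q := by
      intro g
      rw [hf]
      rw [Matrix.trace_mul_cycle]
      have h6 : (g : Matrix (Fin n) (Fin n) ℂ)ᴴ * (g : Matrix (Fin n) (Fin n) ℂ) = 1 := by
        have := Unitary.star_mul_self_of_mem g.2
        rwa [Matrix.star_eq_conjTranspose] at this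
      rw [h6, Matrix.one_mul]
    simp only [this]
    simp
  -- conclude
  have hne : (n : ℂ) ≠ 0 := by
    exact_mod_cast Nat.cast_ne_zero.mpr hn.ne'
  ext i j
  by_cases hij : i = j
  · subst hij
    have hsum : Matrix.trace T = (n : ℂ) * T i i := by
      simp only [Matrix.trace, Matrix.diag]
      rw [Finset.sum_congr rfl (fun k _ => hdiag k i)]
      simp [Finset.card_univ, mul_comm]
    have : T i i = Matrix.trace Q / (n : ℂ) := by
      rw [← htr, hsum]
      field_simp
    rw [this]
    simp [Matrix.one_apply]
  · rw [hoff i j hij]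
    simp [Matrix.one_apply, hij]

end conj

section blocks
open scoped Matrix

noncomputable def bkA (n : ℕ) :
    Matrix (Fin 1) (Fin 1) ℂ →ₗ[ℂ] Matrix (Fin 1 ⊕ Fin n) (Fin 1 ⊕ Fin n) ℂ where
  toFun X := Matrix.fromBlocks X 0 0 0
  map_add' X Y := by ext (i | i) (j | j) <;> simp [Matrix.fromBlocks]
  map_smul' c X := by ext (i | i) (j | j) <;> simp [Matrix.fromBlocks]

noncomputable def bkB (n : ℕ) :
    Matrix (Fin 1) (Fin n) ℂ →ₗ[ℂ] Matrix (Fin 1 ⊕ Fin n) (Fin 1 ⊕ Fin n) ℂ where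
  toFun X := Matrix.fromBlocks 0 X 0 0
  map_add' X Y := by ext (i | i) (j | j) <;> simp [Matrix.fromBlocks]
  map_smul' c X := by ext (i | i) (j | j) <;> simp [Matrix.fromBlocks]

noncomputable def bkC (n : ℕ) :
    Matrix (Fin n) (Fin 1) ℂ →ₗ[ℂ] Matrix (Fin 1 ⊕ Fin n) (Fin 1 ⊕ Fin n) ℂ where
  toFun X := Matrix.fromBlocks 0 0 X 0
  map_add' X Y := by ext (i | i) (j | j) <;> simp [Matrix.fromBlocks]
  map_smul' c X := by ext (i | i) (j | j) <;> simp [Matrix.fromBlocks]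

noncomputable def bkD (n : ℕ) :
    Matrix (Fin n) (Fin n) ℂ →ₗ[ℂ] Matrix (Fin 1 ⊕ Fin n) (Fin 1 ⊕ Fin n) ℂ where
  toFun X := Matrix.fromBlocks 0 0 0 X
  map_add' X Y := by ext (i | i) (j | j) <;> simp [Matrix.fromBlocks]
  map_smul' c X := by ext (i | i) (j | j) <;> simp [Matrix.fromBlocks]

lemma bk_decomp {n : ℕ} (W : Matrix (Fin 1) (Fin 1) ℂ) (X : Matrix (Fin 1) (Fin n) ℂ)
    (Y : Matrix (Fin n) (Fin 1) ℂ) (Z : Matrix (Fin n) (Fin n) ℂ) :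
    Matrix.fromBlocks W X Y Z = bkA n W + bkB n X + bkC n Y + bkD n Z := by
  ext (i | i) (j | j) <;> simp [bkA, bkB, bkC, bkD, Matrix.fromBlocks]

end blocks

open scoped Matrix in
theorem stmt_9' (D : ℕ) (hD : 2 ≤ D)
    (A : Matrix (Fin 1) (Fin 1) ℂ) (B : Matrix (Fin 1) (Fin (D - 1)) ℂ)
    (C : Matrix (Fin (D - 1)) (Fin 1) ℂ) (Q : Matrix (Fin (D - 1)) (Fin (D - 1)) ℂ)
    (μ : Measure (Matrix.unitaryGroup (Fin (D - 1)) ℂ)) [IsProbabilityMeasure μ]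
    (hinv : ∀ g : Matrix.unitaryGroup (Fin (D - 1)) ℂ,
      Measure.map (fun x => g * x) μ = μ) :
    (∫ g : Matrix.unitaryGroup (Fin (D - 1)) ℂ,
        (Matrix.fromBlocks 1 0 0 (g : Matrix (Fin (D - 1)) (Fin (D - 1)) ℂ))
          * Matrix.fromBlocks A B C Q
          * star (Matrix.fromBlocks 1 0 0 (g : Matrix (Fin (D - 1)) (Fin (D - 1)) ℂ)) ∂μ)
      = Matrix.fromBlocks A 0 0
          (((Matrix.trace Q) / ((D : ℂ) - 1)) • (1 : Matrix (Fin (D - 1)) (Fin (D - 1)) ℂ)) := by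
  have hn : 0 < D - 1 := by omega
  have hcast : ((D : ℂ) - 1) = ((D - 1 : ℕ) : ℂ) := by
    have h1 : (1 : ℕ) ≤ D := by omega
    rw [Nat.cast_sub h1]
    norm_num
  -- pointwise decomposition of the integrand
  have hpt : ∀ g : Matrix.unitaryGroup (Fin (D - 1)) ℂ,
      (Matrix.fromBlocks 1 0 0 (g : Matrix (Fin (D - 1)) (Fin (D - 1)) ℂ))
          * Matrix.fromBlocks A B C Q
          * star (Matrix.fromBlocks 1 0 0 (g : Matrix (Fin (D - 1)) (Fin (D - 1)) ℂ))
        = bkA (D - 1) A + bkB (D - 1) (B * (g : Matrix (Fin (D - 1)) (Fin (D - 1)) ℂ)ᴴ)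
            + bkC (D - 1) ((g : Matrix (Fin (D - 1)) (Fin (D - 1)) ℂ) * C)
            + bkD (D - 1) ((g : Matrix (Fin (D - 1)) (Fin (D - 1)) ℂ) * Q * (g : Matrix (Fin (D - 1)) (Fin (D - 1)) ℂ)ᴴ) := by
    intro g
    rw [Matrix.star_eq_conjTranspose, Matrix.fromBlocks_conjTranspose]
    rw [Matrix.fromBlocks_multiply, Matrix.fromBlocks_multiply]
    rw [← bk_decomp]
    simp [Matrix.mul_assoc]
  simp_rw [hpt]
  -- integrability of the pieces
  have hcB : Continuous (fun g : Matrix.unitaryGroup (Fin (D - 1)) ℂ =>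
      B * (g : Matrix (Fin (D - 1)) (Fin (D - 1)) ℂ)ᴴ) :=
    continuous_const.matrix_mul continuous_subtype_val.matrix_conjTranspose
  have hcC : Continuous (fun g : Matrix.unitaryGroup (Fin (D - 1)) ℂ =>
      (g : Matrix (Fin (D - 1)) (Fin (D - 1)) ℂ) * C) :=
    continuous_subtype_val.matrix_mul continuous_const
  have hcD : Continuous (fun g : Matrix.unitaryGroup (Fin (D - 1)) ℂ =>
      (g : Matrix (Fin (D - 1)) (Fin (D - 1)) ℂ) * Q * (g : Matrix (Fin (D - 1)) (Fin (D - 1)) ℂ)ᴴ) :=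
    (continuous_subtype_val.matrix_mul continuous_const).matrix_mul
      continuous_subtype_val.matrix_conjTranspose
  have hiB := cont_integrable hcB μ
  have hiC := cont_integrable hcC μ
  have hiD := cont_integrable hcD μ
  have hLB : Continuous (bkB (D - 1)) := (LinearMap.toContinuousLinearMap (bkB (D - 1))).continuous
  have hLC : Continuous (bkC (D - 1)) := (LinearMap.toContinuousLinearMap (bkC (D - 1))).continuous
  have hLD : Continuous (bkD (D - 1)) := (LinearMap.toContinuousLinearMap (bkD (D - 1))).continuous
  have hi2 : Integrable (fun g : Matrix.unitaryGroup (Fin (D - 1)) ℂ =>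
      bkB (D - 1) (B * (g : Matrix (Fin (D - 1)) (Fin (D - 1)) ℂ)ᴴ)) μ := cont_integrable (hLB.comp hcB) μ
  have hi3 : Integrable (fun g : Matrix.unitaryGroup (Fin (D - 1)) ℂ =>
      bkC (D - 1) ((g : Matrix (Fin (D - 1)) (Fin (D - 1)) ℂ) * C)) μ := cont_integrable (hLC.comp hcC) μ
  have hi4 : Integrable (fun g : Matrix.unitaryGroup (Fin (D - 1)) ℂ =>
      bkD (D - 1) ((g : Matrix (Fin (D - 1)) (Fin (D - 1)) ℂ) * Q * (g : Matrix (Fin (D - 1)) (Fin (D - 1)) ℂ)ᴴ)) μ :=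
    cont_integrable (hLD.comp hcD) μ
  have eC : (∫ g : Matrix.unitaryGroup (Fin (D - 1)) ℂ, ((bkA (D - 1)) A + (bkB (D - 1)) (B * (g : Matrix (Fin (D - 1)) (Fin (D - 1)) ℂ)ᴴ)) ∂μ) = (∫ g : Matrix.unitaryGroup (Fin (D - 1)) ℂ, ((bkA (D - 1)) A) ∂μ) + (∫ g : Matrix.unitaryGroup (Fin (D - 1)) ℂ, ((bkB (D - 1)) (B * (g : Matrix (Fin (D - 1)) (Fin (D - 1)) ℂ)ᴴ)) ∂μ) :=
    integral_add (integrable_const _) hi2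
  have eB : (∫ g : Matrix.unitaryGroup (Fin (D - 1)) ℂ, ((bkA (D - 1)) A + (bkB (D - 1)) (B * (g : Matrix (Fin (D - 1)) (Fin (D - 1)) ℂ)ᴴ) + (bkC (D - 1)) ((g : Matrix (Fin (D - 1)) (Fin (D - 1)) ℂ) * C)) ∂μ) = (∫ g : Matrix.unitaryGroup (Fin (D - 1)) ℂ, ((bkA (D - 1)) A + (bkB (D - 1)) (B * (g : Matrix (Fin (D - 1)) (Fin (D - 1)) ℂ)ᴴ)) ∂μ) + (∫ g : Matrix.unitaryGroup (Fin (D - 1)) ℂ, ((bkC (D - 1)) ((g : Matrix (Fin (D - 1)) (Fin (D - 1)) ℂ) * C)) ∂μ) :=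
    integral_add ((integrable_const _).add hi2) hi3
  have eA : (∫ g : Matrix.unitaryGroup (Fin (D - 1)) ℂ, ((bkA (D - 1)) A + (bkB (D - 1)) (B * (g : Matrix (Fin (D - 1)) (Fin (D - 1)) ℂ)ᴴ) + (bkC (D - 1)) ((g : Matrix (Fin (D - 1)) (Fin (D - 1)) ℂ) * C) + (bkD (D - 1)) ((g : Matrix (Fin (D - 1)) (Fin (D - 1)) ℂ) * Q * (g : Matrix (Fin (D - 1)) (Fin (D - 1)) ℂ)ᴴ)) ∂μ)
      = (∫ g : Matrix.unitaryGroup (Fin (D - 1)) ℂ, ((bkA (D - 1)) A + (bkB (D - 1)) (B * (g : Matrix (Fin (D - 1)) (Fin (D - 1)) ℂ)ᴴ) + (bkC (D - 1)) ((g : Matrix (Fin (D - 1)) (Fin (D - 1)) ℂ) * C)) ∂μ) + (∫ g : Matrix.unitaryGroup (Fin (D - 1)) ℂ, ((bkD (D - 1)) ((g : Matrix (Fin (D - 1)) (Fin (D - 1)) ℂ) * Q * (g : Matrix (Fin (D - 1)) (Fin (D - 1)) ℂ)ᴴ)) ∂μ) :=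
    integral_add (((integrable_const _).add hi2).add hi3) hi4
  rw [eA, eB, eC, integral_const]
  rw [← lin_int μ (bkB (D - 1)) hiB, ← lin_int μ (bkC (D - 1)) hiC, ← lin_int μ (bkD (D - 1)) hiD]
  rw [avg_mul_left μ hinv B, avg_mul_right μ hinv C, avg_conj hn μ hinv Q]
  rw [bk_decomp A 0 0 ((Matrix.trace Q / ((D : ℂ) - 1)) • 1), hcast]
  simp

/-- The average-projector computation (Eq. avg_proj) in the proof of Theorem 1 of
the paper: conjugating a block matrix `M = fromBlocks A B C Q` by the block-diagonal
unitaries `B_g = 1 ⊕ g` with `g` Haar-random in `U(D−1)` (Haar characterized as a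
left-invariant Borel probability measure) averages the off-diagonal blocks to `0`
and the lower-right block to its trace part. -/
theorem stmt_9 (D : ℕ) (hD : 2 ≤ D)
    (A : Matrix (Fin 1) (Fin 1) ℂ) (B : Matrix (Fin 1) (Fin (D - 1)) ℂ)
    (C : Matrix (Fin (D - 1)) (Fin 1) ℂ) (Q : Matrix (Fin (D - 1)) (Fin (D - 1)) ℂ)
    (μ : Measure (Matrix.unitaryGroup (Fin (D - 1)) ℂ)) [IsProbabilityMeasure μ]
    (hinv : ∀ g : Matrix.unitaryGroup (Fin (D - 1)) ℂ,
      Measure.map (fun x => g * x) μ = μ) :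
    (∫ g : Matrix.unitaryGroup (Fin (D - 1)) ℂ,
        (Matrix.fromBlocks 1 0 0 (g : Matrix (Fin (D - 1)) (Fin (D - 1)) ℂ))
          * Matrix.fromBlocks A B C Q
          * star (Matrix.fromBlocks 1 0 0 (g : Matrix (Fin (D - 1)) (Fin (D - 1)) ℂ)) ∂μ)
      = Matrix.fromBlocks A 0 0
          (((Matrix.trace Q) / ((D : ℂ) - 1)) • (1 : Matrix (Fin (D - 1)) (Fin (D - 1)) ℂ)) := by
  exact stmt_9' D hD A B C Q μ hinv
end

section
/- Let D ≥ 2, let 0 < p_m < 1 and d_m ≥ 1, and let Π₀ be a D×D complex matrix that is a Hermitian orthogonal projector (Π₀ᴴ = Π₀, Π₀·Π₀ = Π₀) with (Π₀)₀₀ = p_m and trace Π₀ = d_m. Let ψ := e₀ be the first standard basis vector of ℂ^D. For g in the unitary group U(D−1), let B_g := Matrix.fromBlocks 1 0 0 g and Π_g := B_g · Π₀ · (B_g)ᴴ. Fix k ≥ 0, unitaries U₁,…,U_k ∈ U(D) and phases φ₁,…,φ_k ∈ ℝ (all independent of g), and define the oracle O_g(φ) := 1 + (exp(i·φ) − 1)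 • Π_g and the output state ψ_g := U_k · O_g(φ_k) · ⋯ · U₁ · O_g(φ₁) · ψ. Suppose that for every g ∈ U(D−1) one has Re ⟨ψ_g, Π_g ψ_g⟩ ≥ 1 − ε, where 0 ≤ ε. Then, with M := max(p_m, (d_m − p_m)/(D−1)), it holds that Real.sqrt (1 − M) − Real.sqrt ε ≤ 2·k·Real.sqrt M. -/
open Matrix


set_option linter.unusedSectionVars false
set_option maxHeartbeats 1000000

section Helpers
variable {ι : Type*} [Fintype ι] [DecidableEq ι]

noncomputable def nrm (v : ι → ℂ) : ℝ := ‖(WithLp.equiv 2 (ι → ℂ)).symm v‖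

lemma nrm_nonneg (v : ι → ℂ) : 0 ≤ nrm v := norm_nonneg _

lemma nrm_sub_comm (v w : ι → ℂ) : nrm (v - w) = nrm (w - v) := by
  unfold nrm
  exact norm_sub_rev ((WithLp.equiv 2 (ι → ℂ)).symm v) ((WithLp.equiv 2 (ι → ℂ)).symm w)

lemma nrm_triangle (v w : ι → ℂ) : nrm (v + w) ≤ nrm v + nrm w := by
  unfold nrm
  exact norm_add_le ((WithLp.equiv 2 (ι → ℂ)).symm v) ((WithLp.equiv 2 (ι → ℂ)).symm w)

lemma inner_eq_dot (v w : ι → ℂ) :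
    (inner ℂ ((WithLp.equiv 2 (ι → ℂ)).symm v) ((WithLp.equiv 2 (ι → ℂ)).symm w) : ℂ)
      = dotProduct (star v) w := by
  rw [PiLp.inner_apply]
  simp [dotProduct, mul_comm]

lemma nrm_sq_eq (v : ι → ℂ) : nrm v ^ 2 = (dotProduct (star v) v).re := by
  unfold nrm
  rw [← inner_eq_dot, ← inner_self_eq_norm_sq (𝕜 := ℂ) ((WithLp.equiv 2 (ι → ℂ)).symm v)]
  rfl

/-- unitary `A` preserves the sesquilinear dot product -/
lemma dot_unitary {A : Matrix ι ι ℂ} (hA : Aᴴ * A = 1) (v w : ι → ℂ) :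
    dotProduct (star (A *ᵥ v)) (A *ᵥ w) = dotProduct (star v) w := by
  rw [Matrix.star_mulVec, ← Matrix.dotProduct_mulVec, Matrix.mulVec_mulVec, hA, Matrix.one_mulVec]

lemma nrm_unitary {A : Matrix ι ι ℂ} (hA : Aᴴ * A = 1) (v : ι → ℂ) :
    nrm (A *ᵥ v) = nrm v := by
  have h1 : nrm (A *ᵥ v) ^ 2 = nrm v ^ 2 := by
    rw [nrm_sq_eq, nrm_sq_eq, dot_unitary hA]
  nlinarith [nrm_nonneg (A *ᵥ v), nrm_nonneg v]

variable {P : Matrix ι ι ℂ}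

lemma dot_proj (hP : Pᴴ = P) (hP2 : P * P = P) (v : ι → ℂ) :
    (dotProduct (star v) (P *ᵥ v)).re = nrm (P *ᵥ v) ^ 2 := by
  rw [nrm_sq_eq, Matrix.star_mulVec, ← Matrix.dotProduct_mulVec, Matrix.mulVec_mulVec,
    hP, hP2]

lemma nrm_sub_proj (hP : Pᴴ = P) (hP2 : P * P = P) (v : ι → ℂ) :
    nrm (v - P *ᵥ v) ^ 2 = nrm v ^ 2 - nrm (P *ᵥ v) ^ 2 := by
  have key : dotProduct (star (v - P *ᵥ v)) (v - P *ᵥ v)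
      = dotProduct (star v) v - dotProduct (star (P *ᵥ v)) (P *ᵥ v) := by
    have hPP : dotProduct (star (P *ᵥ v)) (P *ᵥ v)
        = dotProduct (star v) (P *ᵥ v) := by
      rw [Matrix.star_mulVec, ← Matrix.dotProduct_mulVec, Matrix.mulVec_mulVec, hP, hP2]
    have hPv : dotProduct (star (P *ᵥ v)) v
        = dotProduct (star (P *ᵥ v)) (P *ᵥ v) := by
      rw [Matrix.star_mulVec, ← Matrix.dotProduct_mulVec, ← Matrix.dotProduct_mulVec,
        Matrix.mulVec_mulVec, hP, hP2]
    rw [star_sub, sub_dotProduct, dotProduct_sub, dotProduct_sub,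
      hPP, hPv, hPP]
    ring
  have := congrArg Complex.re key
  rw [Complex.sub_re] at this
  rw [nrm_sq_eq, nrm_sq_eq, nrm_sq_eq, this]

lemma nrm_proj_le (hP : Pᴴ = P) (hP2 : P * P = P) (v : ι → ℂ) :
    nrm (P *ᵥ v) ≤ nrm v := by
  have h := nrm_sub_proj hP hP2 v
  nlinarith [nrm_nonneg (v - P *ᵥ v), nrm_nonneg (P *ᵥ v), nrm_nonneg v]

lemma nrm_one_sub_proj_le (hP : Pᴴ = P) (hP2 : P * P = P) (v : ι → ℂ) :
    nrm (v - P *ᵥ v) ≤ nrm v := by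
  have h := nrm_sub_proj hP hP2 v
  nlinarith [nrm_nonneg (v - P *ᵥ v), nrm_nonneg (P *ᵥ v), nrm_nonneg v]

noncomputable def oracle (θ : ℝ) (P : Matrix ι ι ℂ) : Matrix ι ι ℂ :=
  1 + (Complex.exp (Complex.I * (θ : ℝ)) - 1) • P

lemma oracle_scalar (θ : ℝ) :
    star (Complex.exp (Complex.I * (θ : ℝ)) - 1) + (Complex.exp (Complex.I * (θ : ℝ)) - 1)
      + star (Complex.exp (Complex.I * (θ : ℝ)) - 1) * (Complex.exp (Complex.I * (θ : ℝ)) - 1) = 0 := by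
  have h1 : star (Complex.exp (Complex.I * (θ : ℝ)) - 1)
      = Complex.exp (-(Complex.I * (θ : ℝ))) - 1 := by
    have : (starRingEnd ℂ) (Complex.exp (Complex.I * (θ : ℝ)))
        = Complex.exp (-(Complex.I * (θ : ℝ))) := by
      rw [← Complex.exp_conj]
      congr 1
      simp [Complex.conj_I]
    rw [show star (Complex.exp (Complex.I * (θ : ℝ)) - 1)
      = (starRingEnd ℂ) (Complex.exp (Complex.I * (θ : ℝ)) - 1) from rfl, map_sub, this, _root_.map_one]
  have h2 : Complex.exp (-(Complex.I * (θ : ℝ))) * Complex.exp (Complex.I * (θ : ℝ)) = 1 := by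
    rw [← Complex.exp_add]; simp
  rw [h1]
  linear_combination h2

lemma oracle_unitary (hP : Pᴴ = P) (hP2 : P * P = P) (θ : ℝ) :
    (oracle θ P)ᴴ * oracle θ P = 1 := by
  set c : ℂ := Complex.exp (Complex.I * (θ : ℝ)) - 1 with hc
  unfold oracle
  rw [conjTranspose_add, conjTranspose_smul, conjTranspose_one, hP]
  rw [add_mul, mul_add, mul_add, one_mul, mul_one, one_mul]
  rw [smul_mul_smul_comm, hP2]
  have : (1 : Matrix ι ι ℂ) + c • P + (star c • P + (star c * c) • P)
      = 1 + (star c + c + star c * c) • P := by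
    rw [add_smul, add_smul]
    abel
  rw [this, oracle_scalar θ, zero_smul, add_zero]

lemma oracle_sub_one (θ : ℝ) (v : ι → ℂ) :
    oracle θ P *ᵥ v - v = (Complex.exp (Complex.I * (θ : ℝ)) - 1) • (P *ᵥ v) := by
  unfold oracle
  rw [Matrix.add_mulVec, Matrix.one_mulVec, Matrix.smul_mulVec]
  abel
end Helpers
section Hybrid
variable {ι : Type*} [Fintype ι] [DecidableEq ι]

lemma nrm_smul (c : ℂ) (v : ι → ℂ) : nrm (c • v) = ‖c‖ * nrm v := by
  unfold nrm
  rw [show (WithLp.equiv 2 (ι → ℂ)).symm (c • v) = c • (WithLp.equiv 2 (ι → ℂ)).symm v from rfl]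
  rw [norm_smul]

lemma abs_exp_sub_one_le (θ : ℝ) : ‖Complex.exp (Complex.I * (θ : ℝ)) - 1‖ ≤ 2 := by
  have h1 : ‖Complex.exp (Complex.I * (θ : ℝ))‖ = 1 := by
    rw [Complex.norm_exp]
    simp
  calc ‖Complex.exp (Complex.I * (θ : ℝ)) - 1‖
      ≤ ‖Complex.exp (Complex.I * (θ : ℝ))‖ + ‖(1 : ℂ)‖ := by
        apply (norm_sub_le _ _)
    _ ≤ 2 := by rw [h1]; norm_num

noncomputable def idealVec (U' : ℕ → Matrix ι ι ℂ) (ψ : ι → ℂ) : ℕ → ι → ℂ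
  | 0 => ψ
  | t+1 => U' t *ᵥ idealVec U' ψ t

noncomputable def realVec (U' : ℕ → Matrix ι ι ℂ) (φ' : ℕ → ℝ) (P : Matrix ι ι ℂ)
    (ψ : ι → ℂ) : ℕ → ι → ℂ
  | 0 => ψ
  | t+1 => (U' t * oracle (φ' t) P) *ᵥ realVec U' φ' P ψ t

variable {U' : ℕ → Matrix ι ι ℂ} {φ' : ℕ → ℝ} {P : Matrix ι ι ℂ} {ψ : ι → ℂ}

lemma idealVec_nrm (hU : ∀ t, (U' t)ᴴ * U' t = 1) :
    ∀ t, nrm (idealVec U' ψ t) = nrm ψ := by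
  intro t
  induction t with
  | zero => rfl
  | succ t ih => rw [idealVec, nrm_unitary (hU t), ih]

lemma step_unitary (hP : Pᴴ = P) (hP2 : P * P = P) (hU : (Uₜ : Matrix ι ι ℂ)ᴴ * Uₜ = 1)
    (θ : ℝ) : (Uₜ * oracle θ P)ᴴ * (Uₜ * oracle θ P) = 1 := by
  rw [conjTranspose_mul, Matrix.mul_assoc, ← Matrix.mul_assoc Uₜᴴ, hU, Matrix.one_mul,
    oracle_unitary hP hP2]

lemma realVec_nrm (hP : Pᴴ = P) (hP2 : P * P = P) (hU : ∀ t, (U' t)ᴴ * U' t = 1) :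
    ∀ t, nrm (realVec U' φ' P ψ t) = nrm ψ := by
  intro t
  induction t with
  | zero => rfl
  | succ t ih => rw [realVec, nrm_unitary (step_unitary hP hP2 (hU t) (φ' t)), ih]

lemma hybrid_bound (hP : Pᴴ = P) (hP2 : P * P = P) (hU : ∀ t, (U' t)ᴴ * U' t = 1) :
    ∀ t, nrm (realVec U' φ' P ψ t - idealVec U' ψ t)
      ≤ 2 * ∑ s ∈ Finset.range t, nrm (P *ᵥ idealVec U' ψ s) := by
  intro t
  induction t with
  | zero => simp [realVec, idealVec, nrm]
  | succ t ih =>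
    have hO := oracle_unitary (P := P) hP hP2 (φ' t)
    have hdec : realVec U' φ' P ψ (t+1) - idealVec U' ψ (t+1)
        = U' t *ᵥ (oracle (φ' t) P *ᵥ realVec U' φ' P ψ t - idealVec U' ψ t) := by
      rw [realVec, idealVec, ← Matrix.mulVec_mulVec, ← Matrix.mulVec_sub]
    have hsum : oracle (φ' t) P *ᵥ realVec U' φ' P ψ t - idealVec U' ψ t
        = (oracle (φ' t) P *ᵥ (realVec U' φ' P ψ t - idealVec U' ψ t))
          + (oracle (φ' t) P *ᵥ idealVec U' ψ t - idealVec U' ψ t) := by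
      rw [Matrix.mulVec_sub]; abel
    rw [hdec, nrm_unitary (hU t), hsum]
    calc nrm ((oracle (φ' t) P *ᵥ (realVec U' φ' P ψ t - idealVec U' ψ t))
          + (oracle (φ' t) P *ᵥ idealVec U' ψ t - idealVec U' ψ t))
        ≤ nrm (oracle (φ' t) P *ᵥ (realVec U' φ' P ψ t - idealVec U' ψ t))
          + nrm (oracle (φ' t) P *ᵥ idealVec U' ψ t - idealVec U' ψ t) := nrm_triangle _ _
      _ ≤ nrm (realVec U' φ' P ψ t - idealVec U' ψ t) + 2 * nrm (P *ᵥ idealVec U' ψ t) := by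
          rw [nrm_unitary hO, oracle_sub_one, nrm_smul]
          have := abs_exp_sub_one_le (φ' t)
          have hn := nrm_nonneg (P *ᵥ idealVec U' ψ t)
          nlinarith
      _ ≤ 2 * ∑ s ∈ Finset.range t, nrm (P *ᵥ idealVec U' ψ s)
          + 2 * nrm (P *ᵥ idealVec U' ψ t) := by linarith
      _ = 2 * ∑ s ∈ Finset.range (t+1), nrm (P *ᵥ idealVec U' ψ s) := by
          rw [Finset.sum_range_succ]; ring

lemma realVec_eq_prod (U' : ℕ → Matrix ι ι ℂ) (φ' : ℕ → ℝ) (P : Matrix ι ι ℂ) (ψ : ι → ℂ) :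
    ∀ k, (List.ofFn fun j : Fin k =>
        U' (k - 1 - (j : ℕ)) * oracle (φ' (k - 1 - (j : ℕ))) P).prod *ᵥ ψ
      = realVec U' φ' P ψ k := by
  intro k
  induction k with
  | zero => simp [realVec]
  | succ k ih =>
    rw [List.ofFn_succ, List.prod_cons]
    simp only [Fin.val_zero, Fin.val_succ]
    have h0 : k + 1 - 1 - 0 = k := by omega
    have hs : ∀ j : ℕ, k + 1 - 1 - (j + 1) = k - 1 - j := by omega
    rw [h0]
    have : (List.ofFn fun j : Fin k =>
        U' (k + 1 - 1 - ((j : ℕ) + 1)) * oracle (φ' (k + 1 - 1 - ((j : ℕ) + 1))) P)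
        = (List.ofFn fun j : Fin k =>
        U' (k - 1 - (j : ℕ)) * oracle (φ' (k - 1 - (j : ℕ))) P) := by
      congr 1
      funext j
      rw [hs]
    rw [this, ← Matrix.mulVec_mulVec, ih, realVec]
end Hybrid
section Average
variable {n : ℕ} [NeZero n]

def sgn (b : Bool) : ℂ := if b then 1 else -1

lemma sgn_mul_self (b : Bool) : sgn b * sgn b = 1 := by cases b <;> simp [sgn]
lemma star_sgn (b : Bool) : star (sgn b) = sgn b := by cases b <;> simp [sgn]
lemma sgn_not (b : Bool) : sgn (!b) = - sgn b := by cases b <;> simp [sgn]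

/-- Signed cyclic-shift matrices: a finite subset of `U(n)` used for averaging. -/
def permG (s : (Fin n → Bool) × Fin n) : Matrix (Fin n) (Fin n) ℂ :=
  Matrix.of fun i j => if i = j + s.2 then sgn (s.1 i) else 0

lemma permG_mem (s : (Fin n → Bool) × Fin n) : permG s ∈ Matrix.unitaryGroup (Fin n) ℂ := by
  rw [Matrix.mem_unitaryGroup_iff]
  ext i j
  rw [Matrix.mul_apply]
  rw [Finset.sum_eq_single (i - s.2)]
  · simp only [permG, Matrix.of_apply, Matrix.star_apply, Matrix.one_apply]
    rw [if_pos (by abel)]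
    by_cases h : i = j
    · subst h; rw [if_pos rfl, if_pos (by abel), star_sgn, sgn_mul_self]
    · rw [if_neg h, if_neg (fun hc => h ?_)]
      · simp
      · have : i - s.2 + s.2 = i := by abel
        rw [← this, ← hc]
  · intro k _ hk
    have : i ≠ k + s.2 := by
      intro hc
      apply hk
      rw [hc]; abel
    simp [permG, this]
  · intro h
    exact absurd (Finset.mem_univ _) h

/-- Explicit form of `(B_g)ᴴ *ᵥ v` for `g = permG s`. -/
def uvec (s : (Fin n → Bool) × Fin n) (v : Fin 1 ⊕ Fin n → ℂ) : Fin 1 ⊕ Fin n → ℂ :=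
  Sum.elim (fun _ => v (Sum.inl 0))
    (fun j => sgn (s.1 (j + s.2)) * v (Sum.inr (j + s.2)))

lemma uvec_eq (s : (Fin n → Bool) × Fin n) (v : Fin 1 ⊕ Fin n → ℂ) :
    (Matrix.fromBlocks (1 : Matrix (Fin 1) (Fin 1) ℂ) 0 0 (permG s))ᴴ *ᵥ v = uvec s v := by
  funext a
  cases a with
  | inl x =>
    have hx : x = 0 := Subsingleton.elim _ _
    subst hx
    simp only [Matrix.mulVec, dotProduct, Fintype.sum_sum_type,
      Matrix.conjTranspose_apply, Matrix.fromBlocks_apply₁₁, Matrix.fromBlocks_apply₂₁,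
      uvec, Sum.elim_inl]
    simp [Matrix.one_apply]
  | inr j =>
    simp only [Matrix.mulVec, dotProduct, Fintype.sum_sum_type,
      Matrix.conjTranspose_apply, Matrix.fromBlocks_apply₁₂, Matrix.fromBlocks_apply₂₂,
      uvec, Sum.elim_inr]
    rw [Finset.sum_eq_single (j + s.2)]
    · simp only [permG, Matrix.of_apply, if_pos rfl, Matrix.zero_apply, star_zero,
        zero_mul, Finset.sum_const_zero, if_true, star_sgn, zero_add]
    · intro i _ hi
      simp [permG, hi]
    · intro h; exact absurd (Finset.mem_univ _) h

lemma sum_sgn_zero (a : Fin n) (K : (Fin n → Bool) → ℂ)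
    (hK : ∀ ε b, K (Function.update ε a b) = K ε) :
    ∑ ε : Fin n → Bool, sgn (ε a) * K ε = 0 := by
  refine Finset.sum_involution (fun ε _ => Function.update ε a (!(ε a)))
    (fun ε _ => ?_) (fun ε _ _ hc => ?_) (fun ε _ => Finset.mem_univ _) (fun ε _ => ?_)
  · beta_reduce
    rw [Function.update_self, sgn_not, hK]
    ring
  · have := congrFun hc a
    beta_reduce at this
    rw [Function.update_self] at this
    exact Bool.not_ne_self _ this
  · beta_reduce
    rw [Function.update_self, Bool.not_not, Function.update_idem, Function.update_eq_self]
end Average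
section Average2
variable {n : ℕ} [NeZero n]

lemma card_bool_fun : (Finset.univ : Finset (Fin n → Bool)).card = 2 ^ n := by
  rw [Finset.card_univ]
  rw [Fintype.card_fun]
  simp

lemma avg_dot (P0 : Matrix (Fin 1 ⊕ Fin n) (Fin 1 ⊕ Fin n) ℂ) (v : Fin 1 ⊕ Fin n → ℂ) :
    ∑ s : (Fin n → Bool) × Fin n, dotProduct (star (uvec s v)) (P0 *ᵥ uvec s v)
      = (n : ℂ) * 2 ^ n * (P0 (Sum.inl 0) (Sum.inl 0) * (star (v (Sum.inl 0)) * v (Sum.inl 0)))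
        + 2 ^ n * ((∑ i, P0 (Sum.inr i) (Sum.inr i))
            * ∑ j, star (v (Sum.inr j)) * v (Sum.inr j)) := by
  have hF : ∀ s : (Fin n → Bool) × Fin n,
      dotProduct (star (uvec s v)) (P0 *ᵥ uvec s v)
        = ∑ A, ∑ B, star (uvec s v A) * (P0 A B * uvec s v B) := by
    intro s
    simp only [dotProduct, Matrix.mulVec, Pi.star_apply, Finset.mul_sum]
  rw [Finset.sum_congr rfl (fun s _ => hF s)]
  rw [Fintype.sum_prod_type]
  rw [Finset.sum_comm]
  -- now goal: ∑ c, ∑ ε, ∑ A, ∑ B, ...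
  have hfix : ∀ c : Fin n,
      (∑ ε : Fin n → Bool, ∑ A, ∑ B, star (uvec (ε, c) v A) * (P0 A B * uvec (ε, c) v B))
        = 2 ^ n * (P0 (Sum.inl 0) (Sum.inl 0) * (star (v (Sum.inl 0)) * v (Sum.inl 0)))
          + 2 ^ n * ∑ i, star (v (Sum.inr (i + c)))
              * (P0 (Sum.inr i) (Sum.inr i) * v (Sum.inr (i + c))) := by
    intro c
    rw [Finset.sum_comm]
    have hswap : ∀ A, (∑ ε : Fin n → Bool, ∑ B, star (uvec (ε, c) v A) * (P0 A B * uvec (ε, c) v B))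
        = ∑ B, ∑ ε : Fin n → Bool, star (uvec (ε, c) v A) * (P0 A B * uvec (ε, c) v B) :=
      fun A => Finset.sum_comm
    rw [Finset.sum_congr rfl (fun A _ => hswap A)]
    -- split outer sum over A and inner over B
    rw [Fintype.sum_sum_type]
    have hBsplit : ∀ (A : Fin 1 ⊕ Fin n),
        (∑ B, ∑ ε : Fin n → Bool, star (uvec (ε, c) v A) * (P0 A B * uvec (ε, c) v B))
          = (∑ y : Fin 1, ∑ ε : Fin n → Bool,
              star (uvec (ε, c) v A) * (P0 A (Sum.inl y) * uvec (ε, c) v (Sum.inl y)))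
            + ∑ j, ∑ ε : Fin n → Bool,
              star (uvec (ε, c) v A) * (P0 A (Sum.inr j) * uvec (ε, c) v (Sum.inr j)) :=
      fun A => Fintype.sum_sum_type _
    -- the four blocks
    have h11 : ∀ (x y : Fin 1),
        (∑ ε : Fin n → Bool, star (uvec (ε, c) v (Sum.inl x)) * (P0 (Sum.inl x) (Sum.inl y) * uvec (ε, c) v (Sum.inl y)))
          = 2 ^ n * (star (v (Sum.inl 0)) * (P0 (Sum.inl x) (Sum.inl y) * v (Sum.inl 0))) := by
      intro x y
      simp only [uvec, Sum.elim_inl]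
      rw [Finset.sum_const, card_bool_fun, nsmul_eq_mul]
      push_cast
      ring
    have h12 : ∀ (x : Fin 1) (j : Fin n),
        (∑ ε : Fin n → Bool, star (uvec (ε, c) v (Sum.inl x)) * (P0 (Sum.inl x) (Sum.inr j) * uvec (ε, c) v (Sum.inr j)))
          = 0 := by
      intro x j
      have hterm : ∀ ε : Fin n → Bool,
          star (uvec (ε, c) v (Sum.inl x)) * (P0 (Sum.inl x) (Sum.inr j) * uvec (ε, c) v (Sum.inr j))
            = sgn (ε (j + c)) * (star (v (Sum.inl 0)) * (P0 (Sum.inl x) (Sum.inr j) * v (Sum.inr (j + c)))) := by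
        intro ε
        simp only [uvec, Sum.elim_inl, Sum.elim_inr]
        ring
      rw [Finset.sum_congr rfl (fun ε _ => hterm ε)]
      exact sum_sgn_zero _ _ (fun _ _ => rfl)
    have h21 : ∀ (i : Fin n) (y : Fin 1),
        (∑ ε : Fin n → Bool, star (uvec (ε, c) v (Sum.inr i)) * (P0 (Sum.inr i) (Sum.inl y) * uvec (ε, c) v (Sum.inl y)))
          = 0 := by
      intro i y
      have hterm : ∀ ε : Fin n → Bool,
          star (uvec (ε, c) v (Sum.inr i)) * (P0 (Sum.inr i) (Sum.inl y) * uvec (ε, c) v (Sum.inl y))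
            = sgn (ε (i + c)) * (star (v (Sum.inr (i + c))) * (P0 (Sum.inr i) (Sum.inl y) * v (Sum.inl 0))) := by
        intro ε
        simp only [uvec, Sum.elim_inl, Sum.elim_inr, star_mul', star_sgn]
        ring
      rw [Finset.sum_congr rfl (fun ε _ => hterm ε)]
      exact sum_sgn_zero _ _ (fun _ _ => rfl)
    have h22 : ∀ (i j : Fin n),
        (∑ ε : Fin n → Bool, star (uvec (ε, c) v (Sum.inr i)) * (P0 (Sum.inr i) (Sum.inr j) * uvec (ε, c) v (Sum.inr j)))
          = if i = j then 2 ^ n * (star (v (Sum.inr (i + c))) * (P0 (Sum.inr i) (Sum.inr i) * v (Sum.inr (i + c)))) else 0 := by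
      intro i j
      by_cases hij : i = j
      · subst hij
        rw [if_pos rfl]
        have hterm : ∀ ε : Fin n → Bool,
            star (uvec (ε, c) v (Sum.inr i)) * (P0 (Sum.inr i) (Sum.inr i) * uvec (ε, c) v (Sum.inr i))
              = star (v (Sum.inr (i + c))) * (P0 (Sum.inr i) (Sum.inr i) * v (Sum.inr (i + c))) := by
          intro ε
          simp only [uvec, Sum.elim_inr, star_mul', star_sgn]
          linear_combination (star (v (Sum.inr (i + c))) * (P0 (Sum.inr i) (Sum.inr i) * v (Sum.inr (i + c)))) * sgn_mul_self (ε (i + c))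
        rw [Finset.sum_congr rfl (fun ε _ => hterm ε)]
        rw [Finset.sum_const, card_bool_fun, nsmul_eq_mul]
        push_cast
        ring
      · rw [if_neg hij]
        have hterm : ∀ ε : Fin n → Bool,
            star (uvec (ε, c) v (Sum.inr i)) * (P0 (Sum.inr i) (Sum.inr j) * uvec (ε, c) v (Sum.inr j))
              = sgn (ε (i + c)) * (sgn (ε (j + c))
                  * (star (v (Sum.inr (i + c))) * (P0 (Sum.inr i) (Sum.inr j) * v (Sum.inr (j + c))))) := by
          intro ε
          simp only [uvec, Sum.elim_inr, star_mul', star_sgn]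
          ring
        rw [Finset.sum_congr rfl (fun ε _ => hterm ε)]
        apply sum_sgn_zero (i + c)
          (fun ε => sgn (ε (j + c)) * (star (v (Sum.inr (i + c))) * (P0 (Sum.inr i) (Sum.inr j) * v (Sum.inr (j + c)))))
        intro ε b
        have hne : j + c ≠ i + c := fun hc => hij (by
          have := add_right_cancel hc
          exact this.symm)
        rw [Function.update_of_ne hne]
    calc (∑ x : Fin 1, ∑ B, ∑ ε : Fin n → Bool,
            star (uvec (ε, c) v (Sum.inl x)) * (P0 (Sum.inl x) B * uvec (ε, c) v B))
          + ∑ i, ∑ B, ∑ ε : Fin n → Bool,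
            star (uvec (ε, c) v (Sum.inr i)) * (P0 (Sum.inr i) B * uvec (ε, c) v B)
        = (∑ x : Fin 1, ((∑ y : Fin 1, 2 ^ n * (star (v (Sum.inl 0)) * (P0 (Sum.inl x) (Sum.inl y) * v (Sum.inl 0)))) + ∑ j : Fin n, (0:ℂ)))
          + ∑ i, ((∑ y : Fin 1, (0:ℂ)) + ∑ j, if i = j then 2 ^ n * (star (v (Sum.inr (i + c))) * (P0 (Sum.inr i) (Sum.inr i) * v (Sum.inr (i + c)))) else 0) := by
          congr 1
          · apply Finset.sum_congr rfl
            intro x _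
            rw [hBsplit]
            congr 1
            · exact Finset.sum_congr rfl (fun y _ => h11 x y)
            · exact Finset.sum_congr rfl (fun j _ => h12 x j)
          · apply Finset.sum_congr rfl
            intro i _
            rw [hBsplit]
            congr 1
            · exact Finset.sum_congr rfl (fun y _ => h21 i y)
            · exact Finset.sum_congr rfl (fun j _ => h22 i j)
      _ = 2 ^ n * (P0 (Sum.inl 0) (Sum.inl 0) * (star (v (Sum.inl 0)) * v (Sum.inl 0)))
          + 2 ^ n * ∑ i, star (v (Sum.inr (i + c))) * (P0 (Sum.inr i) (Sum.inr i) * v (Sum.inr (i + c))) := by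
          simp only [Finset.sum_const_zero, add_zero, zero_add, Fin.sum_univ_one]
          have e2 : (∑ i : Fin n, ∑ j : Fin n, if i = j then 2 ^ n * (star (v (Sum.inr (i + c))) * (P0 (Sum.inr i) (Sum.inr i) * v (Sum.inr (i + c)))) else 0)
              = ∑ i : Fin n, (2:ℂ) ^ n * (star (v (Sum.inr (i + c))) * (P0 (Sum.inr i) (Sum.inr i) * v (Sum.inr (i + c)))) := by
            apply Finset.sum_congr rfl
            intro i _
            rw [Finset.sum_ite_eq]
            simp only [Finset.mem_univ, if_pos]
          rw [e2, ← Finset.mul_sum]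
          ring
  rw [Finset.sum_congr rfl (fun c _ => hfix c)]
  rw [Finset.sum_add_distrib, Finset.sum_const, Finset.card_univ, Fintype.card_fin, nsmul_eq_mul]
  have e3 : (∑ c : Fin n, (2:ℂ) ^ n * ∑ i, star (v (Sum.inr (i + c))) * (P0 (Sum.inr i) (Sum.inr i) * v (Sum.inr (i + c))))
      = 2 ^ n * ((∑ i, P0 (Sum.inr i) (Sum.inr i)) * ∑ j, star (v (Sum.inr j)) * v (Sum.inr j)) := by
    rw [← Finset.mul_sum]
    congr 1
    rw [Finset.sum_comm, Finset.sum_mul]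
    apply Finset.sum_congr rfl
    intro i _
    have h4 : (∑ c : Fin n, star (v (Sum.inr (i + c))) * (P0 (Sum.inr i) (Sum.inr i) * v (Sum.inr (i + c))))
        = P0 (Sum.inr i) (Sum.inr i) * ∑ c : Fin n, star (v (Sum.inr (i + c))) * v (Sum.inr (i + c)) := by
      rw [Finset.mul_sum]
      exact Finset.sum_congr rfl (fun c _ => by ring)
    have h5 : (∑ c : Fin n, star (v (Sum.inr (i + c))) * v (Sum.inr (i + c)))
        = ∑ j : Fin n, star (v (Sum.inr j)) * v (Sum.inr j) :=
      Fintype.sum_equiv (Equiv.addLeft i) _ _ (fun c => rfl)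
    rw [h4, h5]
  rw [e3]
  ring
end Average2
section Extra
variable {ι : Type*} [Fintype ι] [DecidableEq ι]

lemma my_le_of_sq {a b : ℝ} (ha : 0 ≤ a) (hb : 0 ≤ b) (h : a ^ 2 ≤ b ^ 2) : a ≤ b := by
  nlinarith

lemma conj_dot (B P0 : Matrix ι ι ℂ) (v : ι → ℂ) :
    dotProduct (star (Bᴴ *ᵥ v)) (P0 *ᵥ (Bᴴ *ᵥ v))
      = dotProduct (star v) ((B * P0 * Bᴴ) *ᵥ v) := by
  simp only [Matrix.star_mulVec, Matrix.conjTranspose_conjTranspose,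
    Matrix.dotProduct_mulVec, Matrix.vecMul_vecMul]

lemma nrm_sq_split {n : ℕ} (v : Fin 1 ⊕ Fin n → ℂ) :
    nrm v ^ 2 = Complex.normSq (v (Sum.inl 0)) + ∑ j, Complex.normSq (v (Sum.inr j)) := by
  rw [nrm_sq_eq]
  rw [dotProduct]
  rw [Complex.re_sum]
  rw [Fintype.sum_sum_type]
  simp only [Pi.star_apply]
  rw [Fin.sum_univ_one]
  congr 1
  · rw [show star (v (Sum.inl 0)) * v (Sum.inl 0) = (starRingEnd ℂ) (v (Sum.inl 0)) * v (Sum.inl 0) from rfl]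
    rw [← Complex.normSq_eq_conj_mul_self]
    simp
  · apply Finset.sum_congr rfl
    intro j _
    rw [show star (v (Sum.inr j)) * v (Sum.inr j) = (starRingEnd ℂ) (v (Sum.inr j)) * v (Sum.inr j) from rfl]
    rw [← Complex.normSq_eq_conj_mul_self]
    simp
end Extra
section PG
variable {n : ℕ} [NeZero n]

/-- Block unitary `B_g` for `g = permG s`. -/
noncomputable def BgM (s : (Fin n → Bool) × Fin n) : Matrix (Fin 1 ⊕ Fin n) (Fin 1 ⊕ Fin n) ℂ :=
  Matrix.fromBlocks 1 0 0 (permG s)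

/-- Conjugated projector `Π_g = B_g Π₀ B_gᴴ`. -/
noncomputable def PgM (P0 : Matrix (Fin 1 ⊕ Fin n) (Fin 1 ⊕ Fin n) ℂ) (s : (Fin n → Bool) × Fin n) :
    Matrix (Fin 1 ⊕ Fin n) (Fin 1 ⊕ Fin n) ℂ :=
  BgM s * P0 * (BgM s)ᴴ

lemma BgM_unitary (s : (Fin n → Bool) × Fin n) : (BgM s)ᴴ * BgM s = 1 := by
  unfold BgM
  rw [Matrix.fromBlocks_conjTranspose, Matrix.fromBlocks_multiply]
  have h1 : (permG s)ᴴ * permG s = 1 := by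
    have := permG_mem s
    rw [Matrix.mem_unitaryGroup_iff'] at this
    exact this
  simp [h1, Matrix.fromBlocks_one]

lemma BgM_unitary' (s : (Fin n → Bool) × Fin n) : BgM s * (BgM s)ᴴ = 1 := by
  unfold BgM
  rw [Matrix.fromBlocks_conjTranspose, Matrix.fromBlocks_multiply]
  have h1 : permG s * (permG s)ᴴ = 1 := by
    have := permG_mem s
    rw [Matrix.mem_unitaryGroup_iff] at this
    exact this
  simp [h1, Matrix.fromBlocks_one]

variable {P0 : Matrix (Fin 1 ⊕ Fin n) (Fin 1 ⊕ Fin n) ℂ}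

lemma PgM_herm (hherm : P0ᴴ = P0) (s : (Fin n → Bool) × Fin n) :
    (PgM P0 s)ᴴ = PgM P0 s := by
  unfold PgM
  rw [Matrix.conjTranspose_mul, Matrix.conjTranspose_mul, Matrix.conjTranspose_conjTranspose,
    hherm, Matrix.mul_assoc]

lemma PgM_idem (hidem : P0 * P0 = P0) (s : (Fin n → Bool) × Fin n) :
    PgM P0 s * PgM P0 s = PgM P0 s := by
  unfold PgM
  calc BgM s * P0 * (BgM s)ᴴ * (BgM s * P0 * (BgM s)ᴴ)
      = BgM s * P0 * ((BgM s)ᴴ * BgM s) * P0 * (BgM s)ᴴ := by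
        simp only [Matrix.mul_assoc]
    _ = BgM s * P0 * (BgM s)ᴴ := by
        rw [BgM_unitary s, Matrix.mul_one, Matrix.mul_assoc (BgM s), hidem]

lemma PgM_dot (s : (Fin n → Bool) × Fin n) (v : Fin 1 ⊕ Fin n → ℂ) :
    dotProduct (star v) (PgM P0 s *ᵥ v)
      = dotProduct (star (uvec s v)) (P0 *ᵥ uvec s v) := by
  rw [← uvec_eq s v, conj_dot]
  rfl

lemma avg_bound (p q : ℝ)
    (h00 : P0 (Sum.inl 0) (Sum.inl 0) = (p : ℂ))
    (hQ : (∑ i, P0 (Sum.inr i) (Sum.inr i)) = (q : ℂ)) (v : Fin 1 ⊕ Fin n → ℂ) :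
    ∑ s : (Fin n → Bool) × Fin n, (dotProduct (star v) (PgM P0 s *ᵥ v)).re
      = (n : ℝ) * 2 ^ n * p * Complex.normSq (v (Sum.inl 0))
        + 2 ^ n * q * ∑ j, Complex.normSq (v (Sum.inr j)) := by
  rw [Finset.sum_congr rfl (fun s _ => congrArg Complex.re (PgM_dot s v))]
  rw [← Complex.re_sum, avg_dot P0 v, h00, hQ]
  have hz : ∀ z : ℂ, star z * z = ((Complex.normSq z : ℝ) : ℂ) := by
    intro z
    rw [Complex.normSq_eq_conj_mul_self]
    rfl
  rw [hz, show (∑ j, star (v (Sum.inr j)) * v (Sum.inr j))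
      = ((∑ j, Complex.normSq (v (Sum.inr j)) : ℝ) : ℂ) by
    push_cast
    exact Finset.sum_congr rfl (fun j _ => hz _)]
  have : (n : ℂ) * 2 ^ n * ((p : ℂ) * ((Complex.normSq (v (Sum.inl 0)) : ℝ) : ℂ))
      + 2 ^ n * ((q : ℂ) * ((∑ j, Complex.normSq (v (Sum.inr j)) : ℝ) : ℂ))
      = (((n : ℝ) * 2 ^ n * p * Complex.normSq (v (Sum.inl 0))
        + 2 ^ n * q * ∑ j, Complex.normSq (v (Sum.inr j)) : ℝ) : ℂ) := by
    push_cast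
    ring
  rw [this, Complex.ofReal_re]
end PG


/-- Quantitative form of Theorem 1 of the paper (optimality of the quadratic speedup
for amplitude amplification with a multi-rank target projector). Working on
`ℂ^D ≅ ℂ^(1 ⊕ (D−1))`: if a `k`-query algorithm, alternating fixed unitaries `U j`
with the phase oracles `O_g(φ j) = 1 + (e^{iφ} − 1)·Π_g` for the conjugated projector
`Π_g = B_g Π₀ B_gᴴ` (here `P0` stands for `Π₀`, `Pg` for `Π_g`), achieves
`Re⟨ψ_g, Π_g ψ_g⟩ ≥ 1 − ε` for every `g ∈ U(D−1)`, then
`√(1 − M) − √ε ≤ 2k√M` with `M = max(p_m, (d_m − p_m)/(D−1))`. -/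
theorem stmt_10 (D : ℕ) (hD : 2 ≤ D)
    (p_m : ℝ) (hp0 : 0 < p_m) (hp1 : p_m < 1)
    (d_m : ℕ) (hd : 1 ≤ d_m)
    (P0 : Matrix (Fin 1 ⊕ Fin (D - 1)) (Fin 1 ⊕ Fin (D - 1)) ℂ)
    (hherm : P0ᴴ = P0) (hidem : P0 * P0 = P0)
    (h00 : P0 (Sum.inl 0) (Sum.inl 0) = (p_m : ℂ))
    (htr : Matrix.trace P0 = (d_m : ℂ))
    (k : ℕ) (U : Fin k → Matrix.unitaryGroup (Fin 1 ⊕ Fin (D - 1)) ℂ)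
    (φ : Fin k → ℝ) (ε : ℝ) (hε : 0 ≤ ε)
    (hsucc : ∀ g : Matrix.unitaryGroup (Fin (D - 1)) ℂ,
      let Bg : Matrix (Fin 1 ⊕ Fin (D - 1)) (Fin 1 ⊕ Fin (D - 1)) ℂ :=
        Matrix.fromBlocks 1 0 0 (g : Matrix (Fin (D - 1)) (Fin (D - 1)) ℂ)
      let Pg : Matrix (Fin 1 ⊕ Fin (D - 1)) (Fin 1 ⊕ Fin (D - 1)) ℂ :=
        Bg * P0 * Bgᴴ
      let ψ : (Fin 1 ⊕ Fin (D - 1)) → ℂ := fun i => if i = Sum.inl 0 then 1 else 0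
      let ψg : (Fin 1 ⊕ Fin (D - 1)) → ℂ :=
        (List.ofFn (fun j : Fin k =>
          (U j.rev : Matrix (Fin 1 ⊕ Fin (D - 1)) (Fin 1 ⊕ Fin (D - 1)) ℂ)
            * (1 + (Complex.exp (Complex.I * (φ j.rev : ℝ)) - 1) • Pg))).prod.mulVec ψ
      1 - ε ≤ (dotProduct (star ψg) (Pg.mulVec ψg)).re) :
    Real.sqrt (1 - max p_m (((d_m : ℝ) - p_m) / ((D : ℝ) - 1))) - Real.sqrt ε
      ≤ 2 * k * Real.sqrt (max p_m (((d_m : ℝ) - p_m) / ((D : ℝ) - 1))) := by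
  haveI : NeZero (D - 1) := ⟨by omega⟩
  set M : ℝ := max p_m (((d_m : ℝ) - p_m) / ((D : ℝ) - 1)) with hM
  have hD2 : (2 : ℝ) ≤ (D : ℝ) := by exact_mod_cast hD
  have hncast : ((D - 1 : ℕ) : ℝ) = (D : ℝ) - 1 := by
    rw [Nat.cast_sub (by omega : 1 ≤ D)]
    norm_num
  have hnpos : (0 : ℝ) < ((D - 1 : ℕ) : ℝ) := by rw [hncast]; linarith
  have hMp : p_m ≤ M := le_max_left _ _
  have hM0 : 0 < M := lt_of_lt_of_le hp0 hMp
  have hMq : (d_m : ℝ) - p_m ≤ ((D - 1 : ℕ) : ℝ) * M := by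
    have h := le_max_right p_m (((d_m : ℝ) - p_m) / ((D : ℝ) - 1))
    rw [div_le_iff₀ (by linarith : (0:ℝ) < (D : ℝ) - 1)] at h
    rw [hncast]
    linarith
  -- the extended sequences of unitaries and phases
  set U' : ℕ → Matrix (Fin 1 ⊕ Fin (D - 1)) (Fin 1 ⊕ Fin (D - 1)) ℂ :=
    (fun t => if h : t < k then
      (U ⟨t, h⟩ : Matrix (Fin 1 ⊕ Fin (D - 1)) (Fin 1 ⊕ Fin (D - 1)) ℂ) else 1) with hU'
  set φ' : ℕ → ℝ := (fun t => if h : t < k then φ ⟨t, h⟩ else 0) with hφ'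
  set ψ0 : Fin 1 ⊕ Fin (D - 1) → ℂ := (fun i => if i = Sum.inl 0 then 1 else 0) with hψ0
  have hU'unit : ∀ t, (U' t)ᴴ * U' t = 1 := by
    intro t
    by_cases h : t < k
    · simp only [hU', dif_pos h]
      have := (U ⟨t, h⟩).2
      rw [Matrix.mem_unitaryGroup_iff'] at this
      exact this
    · simp [hU', dif_neg h]
  have hψnrm : nrm ψ0 = 1 := by
    have h2 : nrm ψ0 ^ 2 = 1 := by
      rw [nrm_sq_split]
      simp [hψ0]
    nlinarith [nrm_nonneg ψ0]
  have hIknrm : ∀ t, nrm (idealVec U' ψ0 t) = 1 := by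
    intro t
    rw [idealVec_nrm hU'unit t, hψnrm]
  have hPgH : ∀ s : (Fin (D - 1) → Bool) × Fin (D - 1), (PgM P0 s)ᴴ = PgM P0 s :=
    fun s => PgM_herm hherm s
  have hPg2 : ∀ s : (Fin (D - 1) → Bool) × Fin (D - 1), PgM P0 s * PgM P0 s = PgM P0 s :=
    fun s => PgM_idem hidem s
  have hψgnrm : ∀ s, nrm (realVec U' φ' (PgM P0 s) ψ0 k) = 1 := fun s => by
    rw [realVec_nrm (hPgH s) (hPg2 s) hU'unit, hψnrm]
  -- the success hypothesis, in `realVec` form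
  have hS : ∀ s : (Fin (D - 1) → Bool) × Fin (D - 1),
      1 - ε ≤ nrm (PgM P0 s *ᵥ realVec U' φ' (PgM P0 s) ψ0 k) ^ 2 := by
    intro s
    have h : 1 - ε ≤ (dotProduct
        (star ((List.ofFn (fun j : Fin k =>
          (U j.rev : Matrix (Fin 1 ⊕ Fin (D - 1)) (Fin 1 ⊕ Fin (D - 1)) ℂ)
            * (1 + (Complex.exp (Complex.I * (φ j.rev : ℝ)) - 1) • (PgM P0 s)))).prod.mulVec ψ0))
        ((PgM P0 s).mulVec ((List.ofFn (fun j : Fin k =>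
          (U j.rev : Matrix (Fin 1 ⊕ Fin (D - 1)) (Fin 1 ⊕ Fin (D - 1)) ℂ)
            * (1 + (Complex.exp (Complex.I * (φ j.rev : ℝ)) - 1) • (PgM P0 s)))).prod.mulVec ψ0))).re :=
      hsucc ⟨permG s, permG_mem s⟩
    have heq : (List.ofFn (fun j : Fin k =>
          (U j.rev : Matrix (Fin 1 ⊕ Fin (D - 1)) (Fin 1 ⊕ Fin (D - 1)) ℂ)
            * (1 + (Complex.exp (Complex.I * (φ j.rev : ℝ)) - 1) • (PgM P0 s)))).prod.mulVec ψ0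
        = realVec U' φ' (PgM P0 s) ψ0 k := by
      rw [← realVec_eq_prod U' φ' (PgM P0 s) ψ0 k]
      have hfun : (fun j : Fin k =>
            (U j.rev : Matrix (Fin 1 ⊕ Fin (D - 1)) (Fin 1 ⊕ Fin (D - 1)) ℂ)
              * (1 + (Complex.exp (Complex.I * (φ j.rev : ℝ)) - 1) • (PgM P0 s)))
          = (fun j : Fin k =>
            U' (k - 1 - (j : ℕ)) * oracle (φ' (k - 1 - (j : ℕ))) (PgM P0 s)) := by
        funext j
        have hrev : (j.rev : ℕ) = k - 1 - (j : ℕ) := by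
          rw [Fin.val_rev]
          omega
        rw [← hrev]
        simp only [hU', hφ', dif_pos j.rev.isLt, Fin.eta]
        rfl
      rw [hfun]
    rw [heq, dot_proj (hPgH s) (hPg2 s)] at h
    exact h
  -- pointwise hybrid inequality
  have key1 : ∀ s : (Fin (D - 1) → Bool) × Fin (D - 1),
      1 ≤ nrm (PgM P0 s *ᵥ idealVec U' ψ0 k) ^ 2
        + (Real.sqrt ε + 2 * ∑ t ∈ Finset.range k, nrm (PgM P0 s *ᵥ idealVec U' ψ0 t)) ^ 2 := by
    intro s
    have hb2 : nrm (realVec U' φ' (PgM P0 s) ψ0 k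
        - PgM P0 s *ᵥ realVec U' φ' (PgM P0 s) ψ0 k) ^ 2 ≤ ε := by
      rw [nrm_sub_proj (hPgH s) (hPg2 s), hψgnrm s]
      have := hS s
      nlinarith
    have hb : nrm (realVec U' φ' (PgM P0 s) ψ0 k
        - PgM P0 s *ᵥ realVec U' φ' (PgM P0 s) ψ0 k) ≤ Real.sqrt ε := by
      apply my_le_of_sq (nrm_nonneg _) (Real.sqrt_nonneg _)
      rw [Real.sq_sqrt hε]
      exact hb2
    have hd2 : nrm (idealVec U' ψ0 k - PgM P0 s *ᵥ idealVec U' ψ0 k) ^ 2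
        = 1 - nrm (PgM P0 s *ᵥ idealVec U' ψ0 k) ^ 2 := by
      rw [nrm_sub_proj (hPgH s) (hPg2 s), hIknrm k]
      norm_num
    have hdecomp : idealVec U' ψ0 k - PgM P0 s *ᵥ idealVec U' ψ0 k
        = (realVec U' φ' (PgM P0 s) ψ0 k - PgM P0 s *ᵥ realVec U' φ' (PgM P0 s) ψ0 k)
          + ((idealVec U' ψ0 k - realVec U' φ' (PgM P0 s) ψ0 k)
            - PgM P0 s *ᵥ (idealVec U' ψ0 k - realVec U' φ' (PgM P0 s) ψ0 k)) := by
      rw [Matrix.mulVec_sub]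
      abel
    have hhyb : nrm (idealVec U' ψ0 k - realVec U' φ' (PgM P0 s) ψ0 k)
        ≤ 2 * ∑ t ∈ Finset.range k, nrm (PgM P0 s *ᵥ idealVec U' ψ0 t) := by
      rw [nrm_sub_comm]
      exact hybrid_bound (hPgH s) (hPg2 s) hU'unit k
    have hd : nrm (idealVec U' ψ0 k - PgM P0 s *ᵥ idealVec U' ψ0 k)
        ≤ Real.sqrt ε + 2 * ∑ t ∈ Finset.range k, nrm (PgM P0 s *ᵥ idealVec U' ψ0 t) := by
      rw [hdecomp]
      have h1 := nrm_triangle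
        (realVec U' φ' (PgM P0 s) ψ0 k - PgM P0 s *ᵥ realVec U' φ' (PgM P0 s) ψ0 k)
        ((idealVec U' ψ0 k - realVec U' φ' (PgM P0 s) ψ0 k)
          - PgM P0 s *ᵥ (idealVec U' ψ0 k - realVec U' φ' (PgM P0 s) ψ0 k))
      have h2 := nrm_one_sub_proj_le (hPgH s) (hPg2 s)
        (idealVec U' ψ0 k - realVec U' φ' (PgM P0 s) ψ0 k)
      linarith
    have hsq := pow_le_pow_left₀ (nrm_nonneg _) hd 2
    rw [hd2] at hsq
    linarith
  -- averaging
  set N : ℝ := ((D - 1 : ℕ) : ℝ) * 2 ^ (D - 1) with hN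
  have h2pow : (0 : ℝ) < 2 ^ (D - 1) := by positivity
  have hNpos : 0 < N := by rw [hN]; positivity
  have hQsum : (∑ i, P0 (Sum.inr i) (Sum.inr i)) = (((d_m : ℝ) - p_m : ℝ) : ℂ) := by
    have htr' : Matrix.trace P0
        = P0 (Sum.inl 0) (Sum.inl 0) + ∑ i, P0 (Sum.inr i) (Sum.inr i) := by
      rw [Matrix.trace]
      simp [Matrix.diag, Fintype.sum_sum_type, Fin.sum_univ_one]
    rw [htr', h00] at htr
    push_cast
    linear_combination htr
  have key2 : ∀ t, (∑ s : (Fin (D - 1) → Bool) × Fin (D - 1),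
      nrm (PgM P0 s *ᵥ idealVec U' ψ0 t) ^ 2) ≤ N * M := by
    intro t
    have hsum : (∑ s : (Fin (D - 1) → Bool) × Fin (D - 1),
        nrm (PgM P0 s *ᵥ idealVec U' ψ0 t) ^ 2)
        = ∑ s : (Fin (D - 1) → Bool) × Fin (D - 1),
          (dotProduct (star (idealVec U' ψ0 t)) (PgM P0 s *ᵥ idealVec U' ψ0 t)).re :=
      Finset.sum_congr rfl (fun s _ => (dot_proj (hPgH s) (hPg2 s) _).symm)
    rw [hsum, avg_bound p_m ((d_m : ℝ) - p_m) h00 hQsum (idealVec U' ψ0 t)]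
    have hXY : Complex.normSq (idealVec U' ψ0 t (Sum.inl 0))
        + ∑ j, Complex.normSq (idealVec U' ψ0 t (Sum.inr j)) = 1 := by
      have h := nrm_sq_split (idealVec U' ψ0 t)
      rw [hIknrm t] at h
      nlinarith
    have hX0 : 0 ≤ Complex.normSq (idealVec U' ψ0 t (Sum.inl 0)) := Complex.normSq_nonneg _
    have hY0 : (0:ℝ) ≤ ∑ j, Complex.normSq (idealVec U' ψ0 t (Sum.inr j)) :=
      Finset.sum_nonneg (fun j _ => Complex.normSq_nonneg _)
    rw [hN]
    have t1 : ((D - 1 : ℕ) : ℝ) * 2 ^ (D - 1) * p_m * Complex.normSq (idealVec U' ψ0 t (Sum.inl 0))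
        ≤ ((D - 1 : ℕ) : ℝ) * 2 ^ (D - 1) * M * Complex.normSq (idealVec U' ψ0 t (Sum.inl 0)) := by
      apply mul_le_mul_of_nonneg_right _ hX0
      apply mul_le_mul_of_nonneg_left hMp
      positivity
    have t2 : (2:ℝ) ^ (D - 1) * ((d_m : ℝ) - p_m) * ∑ j, Complex.normSq (idealVec U' ψ0 t (Sum.inr j))
        ≤ (2:ℝ) ^ (D - 1) * (((D - 1 : ℕ) : ℝ) * M) * ∑ j, Complex.normSq (idealVec U' ψ0 t (Sum.inr j)) := by
      apply mul_le_mul_of_nonneg_right _ hY0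
      apply mul_le_mul_of_nonneg_left hMq
      positivity
    calc ((D - 1 : ℕ) : ℝ) * 2 ^ (D - 1) * p_m * Complex.normSq (idealVec U' ψ0 t (Sum.inl 0))
          + (2:ℝ) ^ (D - 1) * ((d_m : ℝ) - p_m) * ∑ j, Complex.normSq (idealVec U' ψ0 t (Sum.inr j))
        ≤ ((D - 1 : ℕ) : ℝ) * 2 ^ (D - 1) * M * Complex.normSq (idealVec U' ψ0 t (Sum.inl 0))
          + (2:ℝ) ^ (D - 1) * (((D - 1 : ℕ) : ℝ) * M) * ∑ j, Complex.normSq (idealVec U' ψ0 t (Sum.inr j)) :=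
          add_le_add t1 t2
      _ = ((D - 1 : ℕ) : ℝ) * 2 ^ (D - 1) * M * (Complex.normSq (idealVec U' ψ0 t (Sum.inl 0))
          + ∑ j, Complex.normSq (idealVec U' ψ0 t (Sum.inr j))) := by ring
      _ = ((D - 1 : ℕ) : ℝ) * 2 ^ (D - 1) * M := by rw [hXY, mul_one]
  -- assembling the real inequalities
  have hcard : ((Fintype.card ((Fin (D - 1) → Bool) × Fin (D - 1))) : ℝ) = N := by
    rw [Fintype.card_prod, Fintype.card_fun, Fintype.card_fin, Fintype.card_bool, hN]
    push_cast
    ring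
  have hsum1 : N ≤ (∑ s : (Fin (D - 1) → Bool) × Fin (D - 1),
      nrm (PgM P0 s *ᵥ idealVec U' ψ0 k) ^ 2)
      + ∑ s : (Fin (D - 1) → Bool) × Fin (D - 1),
        (Real.sqrt ε + 2 * ∑ t ∈ Finset.range k, nrm (PgM P0 s *ᵥ idealVec U' ψ0 t)) ^ 2 := by
    rw [← Finset.sum_add_distrib]
    calc N = ∑ _s : (Fin (D - 1) → Bool) × Fin (D - 1), (1 : ℝ) := by
          rw [Finset.sum_const, Finset.card_univ, nsmul_eq_mul, mul_one, hcard]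
      _ ≤ _ := Finset.sum_le_sum (fun s _ => key1 s)
  have hTnn : ∀ s : (Fin (D - 1) → Bool) × Fin (D - 1),
      (0:ℝ) ≤ ∑ t ∈ Finset.range k, nrm (PgM P0 s *ᵥ idealVec U' ψ0 t) :=
    fun s => Finset.sum_nonneg (fun t _ => nrm_nonneg _)
  have hsumT2 : (∑ s : (Fin (D - 1) → Bool) × Fin (D - 1),
      (∑ t ∈ Finset.range k, nrm (PgM P0 s *ᵥ idealVec U' ψ0 t)) ^ 2)
      ≤ (k:ℝ)^2 * (N * M) := by
    have h1 : ∀ s : (Fin (D - 1) → Bool) × Fin (D - 1),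
        (∑ t ∈ Finset.range k, nrm (PgM P0 s *ᵥ idealVec U' ψ0 t)) ^ 2
          ≤ (k:ℝ) * ∑ t ∈ Finset.range k, nrm (PgM P0 s *ᵥ idealVec U' ψ0 t) ^ 2 := by
      intro s
      have := sq_sum_le_card_mul_sum_sq (s := Finset.range k)
        (f := fun t => nrm (PgM P0 s *ᵥ idealVec U' ψ0 t))
      rwa [Finset.card_range] at this
    calc (∑ s : (Fin (D - 1) → Bool) × Fin (D - 1),
        (∑ t ∈ Finset.range k, nrm (PgM P0 s *ᵥ idealVec U' ψ0 t)) ^ 2)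
        ≤ ∑ s : (Fin (D - 1) → Bool) × Fin (D - 1),
          (k:ℝ) * ∑ t ∈ Finset.range k, nrm (PgM P0 s *ᵥ idealVec U' ψ0 t) ^ 2 :=
          Finset.sum_le_sum (fun s _ => h1 s)
      _ = (k:ℝ) * ∑ t ∈ Finset.range k, ∑ s : (Fin (D - 1) → Bool) × Fin (D - 1),
            nrm (PgM P0 s *ᵥ idealVec U' ψ0 t) ^ 2 := by
          rw [← Finset.mul_sum, Finset.sum_comm]
      _ ≤ (k:ℝ) * ∑ _t ∈ Finset.range k, (N * M) := by
          apply mul_le_mul_of_nonneg_left _ (Nat.cast_nonneg k)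
          exact Finset.sum_le_sum (fun t _ => key2 t)
      _ = (k:ℝ)^2 * (N * M) := by
          rw [Finset.sum_const, Finset.card_range, nsmul_eq_mul]
          ring
  have hsumT : (∑ s : (Fin (D - 1) → Bool) × Fin (D - 1),
      ∑ t ∈ Finset.range k, nrm (PgM P0 s *ᵥ idealVec U' ψ0 t))
      ≤ N * ((k:ℝ) * Real.sqrt M) := by
    apply my_le_of_sq (Finset.sum_nonneg (fun s _ => hTnn s)) (by positivity)
    have hcs := sq_sum_le_card_mul_sum_sq (s := (Finset.univ : Finset ((Fin (D - 1) → Bool) × Fin (D - 1))))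
      (f := fun s => ∑ t ∈ Finset.range k, nrm (PgM P0 s *ᵥ idealVec U' ψ0 t))
    rw [Finset.card_univ, hcard] at hcs
    have hM2 : Real.sqrt M ^ 2 = M := Real.sq_sqrt hM0.le
    calc (∑ s : (Fin (D - 1) → Bool) × Fin (D - 1),
        ∑ t ∈ Finset.range k, nrm (PgM P0 s *ᵥ idealVec U' ψ0 t)) ^ 2
        ≤ N * ∑ s : (Fin (D - 1) → Bool) × Fin (D - 1),
          (∑ t ∈ Finset.range k, nrm (PgM P0 s *ᵥ idealVec U' ψ0 t)) ^ 2 := hcs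
      _ ≤ N * ((k:ℝ)^2 * (N * M)) := mul_le_mul_of_nonneg_left hsumT2 hNpos.le
      _ = (N * ((k:ℝ) * Real.sqrt M)) ^ 2 := by
          nlinarith [hM2]
  have hsum2 : (∑ s : (Fin (D - 1) → Bool) × Fin (D - 1),
      (Real.sqrt ε + 2 * ∑ t ∈ Finset.range k, nrm (PgM P0 s *ᵥ idealVec U' ψ0 t)) ^ 2)
      = N * ε + 4 * Real.sqrt ε * (∑ s : (Fin (D - 1) → Bool) × Fin (D - 1),
          ∑ t ∈ Finset.range k, nrm (PgM P0 s *ᵥ idealVec U' ψ0 t))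
        + 4 * ∑ s : (Fin (D - 1) → Bool) × Fin (D - 1),
          (∑ t ∈ Finset.range k, nrm (PgM P0 s *ᵥ idealVec U' ψ0 t)) ^ 2 := by
    have hε2 : Real.sqrt ε ^ 2 = ε := Real.sq_sqrt hε
    calc (∑ s : (Fin (D - 1) → Bool) × Fin (D - 1),
        (Real.sqrt ε + 2 * ∑ t ∈ Finset.range k, nrm (PgM P0 s *ᵥ idealVec U' ψ0 t)) ^ 2)
        = ∑ s : (Fin (D - 1) → Bool) × Fin (D - 1),
          (ε + (4 * Real.sqrt ε * (∑ t ∈ Finset.range k, nrm (PgM P0 s *ᵥ idealVec U' ψ0 t))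
            + 4 * (∑ t ∈ Finset.range k, nrm (PgM P0 s *ᵥ idealVec U' ψ0 t)) ^ 2)) := by
          apply Finset.sum_congr rfl
          intro s _
          linear_combination hε2
      _ = _ := by
          rw [Finset.sum_add_distrib, Finset.sum_add_distrib, Finset.sum_const,
            Finset.card_univ, nsmul_eq_mul, hcard, ← Finset.mul_sum, ← Finset.mul_sum]
          ring
  -- combine everything
  have main : N ≤ N * M + (N * ε + 4 * Real.sqrt ε * (N * ((k:ℝ) * Real.sqrt M))
      + 4 * ((k:ℝ)^2 * (N * M))) := by
    have h1 := key2 k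
    have h2 := hsum1
    rw [hsum2] at h2
    have h3 : 4 * Real.sqrt ε * (∑ s : (Fin (D - 1) → Bool) × Fin (D - 1),
        ∑ t ∈ Finset.range k, nrm (PgM P0 s *ᵥ idealVec U' ψ0 t))
        ≤ 4 * Real.sqrt ε * (N * ((k:ℝ) * Real.sqrt M)) := by
      apply mul_le_mul_of_nonneg_left hsumT
      positivity
    linarith [hsumT2]
  have hdiv : 1 ≤ M + ε + 4 * Real.sqrt ε * ((k:ℝ) * Real.sqrt M) + 4 * (k:ℝ)^2 * M := by
    have hmul : N * 1 ≤ N * (M + ε + 4 * Real.sqrt ε * ((k:ℝ) * Real.sqrt M)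
        + 4 * (k:ℝ)^2 * M) := by
      rw [mul_one]
      calc N ≤ N * M + (N * ε + 4 * Real.sqrt ε * (N * ((k:ℝ) * Real.sqrt M))
          + 4 * ((k:ℝ)^2 * (N * M))) := main
        _ = N * (M + ε + 4 * Real.sqrt ε * ((k:ℝ) * Real.sqrt M) + 4 * (k:ℝ)^2 * M) := by ring
    exact le_of_mul_le_mul_left hmul hNpos
  have hfin : 1 - M ≤ (Real.sqrt ε + 2 * (k:ℝ) * Real.sqrt M) ^ 2 := by
    have hε2 : Real.sqrt ε ^ 2 = ε := Real.sq_sqrt hε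
    have hM2 : Real.sqrt M ^ 2 = M := Real.sq_sqrt hM0.le
    nlinarith [hdiv]
  have hlast : Real.sqrt (1 - M) ≤ Real.sqrt ε + 2 * (k:ℝ) * Real.sqrt M := by
    have h1 := Real.sqrt_le_sqrt hfin
    rwa [Real.sqrt_sq (by positivity)] at h1
  linarith
end

section
/- Let n, m ≥ 1 and let X, Y : Matrix (Fin n) (Fin m) ℂ satisfy Matrix.trace (X * Xᴴ) = 1 and Matrix.trace (Y * Yᴴ) = 1. Let ι be a finite index type and K : ι → Matrix (Fin m) (Fin m) ℂ a family with ∑ i, (K i)ᴴ * (K i) = 1. If ∑ i, |Matrix.trace (Yᴴ * X * (K i)ᵀ)|² ≥ 1 − ε for some ε ≥ 0, then F(X·Xᴴ, Y·Yᴴ) ≥ 1 − ε, where F(ρ, σ) := (Matrix.trace ((ρ.sqrt * σ * ρ.sqrt).sqrt))², using the positive semidefinite square root of positive semidefinite matrices. -/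
open Matrix
open scoped ComplexOrder

/-- The positive semidefinite square root of a matrix (defined to be `0` on matrices
that are not positive semidefinite). -/
noncomputable def matSqrt {ι : Type*} [Fintype ι] [DecidableEq ι]
    (A : Matrix ι ι ℂ) : Matrix ι ι ℂ :=
  letI := Classical.dec A.PosSemidef
  if h : A.PosSemidef then
    (h.1.eigenvectorUnitary : Matrix ι ι ℂ) *
      diagonal (((↑) : ℝ → ℂ) ∘ (Real.sqrt ·) ∘ h.1.eigenvalues) *
      (star h.1.eigenvectorUnitary : Matrix ι ι ℂ)
  else 0

/-- The fidelity `F(ρ, σ) = (tr √(√ρ σ √ρ))²` between two density matrices. -/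
noncomputable def fidelity {ι : Type*} [Fintype ι] [DecidableEq ι]
    (ρ σ : Matrix ι ι ℂ) : ℝ :=
  ((Matrix.trace (matSqrt (matSqrt ρ * σ * matSqrt ρ))).re) ^ 2

noncomputable def Matrix.PosSemidef.sqrt {ι : Type*} [Fintype ι] [DecidableEq ι]
    {A : Matrix ι ι ℂ} (h : A.PosSemidef) : Matrix ι ι ℂ :=
  (h.1.eigenvectorUnitary : Matrix ι ι ℂ) *
    diagonal (((↑) : ℝ → ℂ) ∘ (Real.sqrt ·) ∘ h.1.eigenvalues) *
    (star h.1.eigenvectorUnitary : Matrix ι ι ℂ)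

lemma Matrix.PosSemidef.posSemidef_sqrt {ι : Type*} [Fintype ι] [DecidableEq ι]
    {A : Matrix ι ι ℂ} (h : A.PosSemidef) : h.sqrt.PosSemidef := by
  unfold Matrix.PosSemidef.sqrt
  have hs : (star h.1.eigenvectorUnitary : Matrix ι ι ℂ)
      = (h.1.eigenvectorUnitary : Matrix ι ι ℂ)ᴴ := rfl
  rw [hs]
  exact (PosSemidef.diagonal (fun i => Complex.zero_le_real.mpr (Real.sqrt_nonneg _))).mul_mul_conjTranspose_same _

lemma Matrix.PosSemidef.sqrt_mul_self {ι : Type*} [Fintype ι] [DecidableEq ι]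
    {A : Matrix ι ι ℂ} (h : A.PosSemidef) : h.sqrt * h.sqrt = A := by
  unfold Matrix.PosSemidef.sqrt
  have hUU : star (h.1.eigenvectorUnitary : Matrix ι ι ℂ) * (h.1.eigenvectorUnitary : Matrix ι ι ℂ) = 1 :=
    mem_unitaryGroup_iff'.mp h.1.eigenvectorUnitary.2
  have spec : A = (h.1.eigenvectorUnitary : Matrix ι ι ℂ) * diagonal (fun i => (h.1.eigenvalues i : ℂ))
      * star (h.1.eigenvectorUnitary : Matrix ι ι ℂ) := h.1.spectral_theorem
  refine Eq.trans ?_ spec.symm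
  set U : Matrix ι ι ℂ := (h.1.eigenvectorUnitary : Matrix ι ι ℂ)
  have hsU : (star h.1.eigenvectorUnitary : Matrix ι ι ℂ) = star U := rfl
  rw [hsU]
  set D := diagonal (((↑) : ℝ → ℂ) ∘ (Real.sqrt ·) ∘ h.1.eigenvalues) with hD
  rw [show U * D * star U * (U * D * star U) = U * D * (star U * U) * D * star U by
    simp only [Matrix.mul_assoc], hUU, Matrix.mul_one, Matrix.mul_assoc U D D, hD,
    diagonal_mul_diagonal]
  congr 3
  funext i
  simp only [Function.comp_apply, ← Complex.ofReal_mul, Real.mul_self_sqrt (h.eigenvalues_nonneg i)]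

lemma exists_factor {N M : Type*} [Fintype N] [DecidableEq N] [Fintype M]
    {R : Matrix N N ℂ} {B : Matrix N M ℂ} (hR : R.PosSemidef) (h2 : R * R = B * Bᴴ) :
    ∃ W : Matrix N M ℂ, B = R * W ∧ (1 - W * Wᴴ).PosSemidef := by
  classical
  have hH := hR.1
  set U : Matrix N N ℂ := (hH.eigenvectorUnitary : Matrix N N ℂ) with hUdef
  set d : N → ℝ := hH.eigenvalues with hddef
  have hUU : star U * U = 1 := mem_unitaryGroup_iff'.mp hH.eigenvectorUnitary.2
  have hUU' : U * star U = 1 := mem_unitaryGroup_iff.mp hH.eigenvectorUnitary.2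
  have spec : R = U * diagonal (fun i => (d i : ℂ)) * star U := hH.spectral_theorem
  set D : Matrix N N ℂ := diagonal (fun i => (d i : ℂ)) with hDdef
  set C : Matrix N M ℂ := star U * B with hCdef
  have hCconj : Cᴴ = Bᴴ * U := by
    rw [hCdef, conjTranspose_mul, star_eq_conjTranspose, conjTranspose_conjTranspose]
  have hCC : C * Cᴴ = diagonal (fun i => (d i : ℂ) ^ 2) := by
    have e1 : C * Cᴴ = star U * (R * R) * U := by
      rw [hCdef, hCconj, h2]; simp only [Matrix.mul_assoc]
    rw [e1, spec]
    calc star U * (U * D * star U * (U * D * star U)) * U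
        = (star U * U) * D * (star U * U) * D * (star U * U) := by
          simp only [Matrix.mul_assoc]
      _ = D * D := by rw [hUU]; simp
      _ = diagonal (fun i => (d i : ℂ) ^ 2) := by
          rw [hDdef, diagonal_mul_diagonal,
            show (fun i => (d i:ℂ) * (d i:ℂ)) = (fun i => (d i:ℂ)^2) from
              funext fun i => (sq _).symm]
  have key : ∀ i, d i = 0 → ∀ j, C i j = 0 := by
    intro i hi j
    have h0 : (C * Cᴴ) i i = 0 := by rw [hCC]; simp [hi]
    rw [Matrix.mul_apply] at h0
    have h0' : ∑ k, (Complex.normSq (C i k) : ℂ) = 0 := by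
      rw [← h0]; congr 1; funext k
      rw [conjTranspose_apply]
      exact (Complex.mul_conj _).symm
    have h0'' : ∑ k, Complex.normSq (C i k) = 0 := by exact_mod_cast h0'
    have := (Finset.sum_eq_zero_iff_of_nonneg (fun k _ => Complex.normSq_nonneg _)).mp h0''
      j (Finset.mem_univ j)
    exact Complex.normSq_eq_zero.mp this
  set g : N → ℂ := fun i => if d i = 0 then 0 else (((d i)⁻¹ : ℝ) : ℂ) with hgdef
  set e : N → ℂ := fun i => if d i = 0 then 0 else 1 with hedef
  have hdg : (fun i => (d i : ℂ) * g i) = e := by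
    funext i
    by_cases hi : d i = 0
    · simp [hgdef, hedef, hi]
    · simp only [hgdef, hedef, if_neg hi, ← Complex.ofReal_mul,
        mul_inv_cancel₀ hi, Complex.ofReal_one]
  have hge : (fun i => g i * ((d i : ℂ) ^ 2 * star (g i))) = e := by
    funext i
    by_cases hi : d i = 0
    · simp [hgdef, hedef, hi]
    · simp only [hgdef, hedef, if_neg hi, Complex.star_def, Complex.conj_ofReal,
        ← Complex.ofReal_pow, ← Complex.ofReal_mul]
      rw [show (d i)⁻¹ * (d i ^ 2 * (d i)⁻¹) = 1 from by rw [sq]; field_simp]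
      exact Complex.ofReal_one
  have heC : diagonal e * C = C := by
    ext i j
    rw [diagonal_mul]
    by_cases hi : d i = 0
    · rw [key i hi j]; simp
    · simp [hedef, hi]
  refine ⟨U * (diagonal g * C), ?_, ?_⟩
  · calc B = U * C := by rw [hCdef, ← Matrix.mul_assoc, hUU', Matrix.one_mul]
      _ = U * (diagonal e * C) := by rw [heC]
      _ = U * (D * (diagonal g * C)) := by
          congr 1
          conv_rhs => rw [← Matrix.mul_assoc]
          rw [hDdef, diagonal_mul_diagonal, hdg]
      _ = R * (U * (diagonal g * C)) := by
          rw [spec]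
          calc U * (D * (diagonal g * C))
              = U * (D * ((star U * U) * (diagonal g * C))) := by
                rw [hUU, Matrix.one_mul]
            _ = U * D * star U * (U * (diagonal g * C)) := by
                simp only [Matrix.mul_assoc]
  · have hWH : (U * (diagonal g * C))ᴴ = Cᴴ * (diagonal (fun i => star (g i)) * star U) := by
      rw [conjTranspose_mul, conjTranspose_mul, diagonal_conjTranspose,
        star_eq_conjTranspose U]
      simp only [Matrix.mul_assoc]
      rfl
    have hWW : U * (diagonal g * C) * (U * (diagonal g * C))ᴴ = U * diagonal e * star U := by
      rw [hWH]
      calc U * (diagonal g * C) * (Cᴴ * (diagonal (fun i => star (g i)) * star U))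
          = U * ((diagonal g * ((C * Cᴴ) * diagonal (fun i => star (g i)))) * star U) := by
            simp only [Matrix.mul_assoc]
        _ = U * diagonal e * star U := by
            rw [hCC, diagonal_mul_diagonal, diagonal_mul_diagonal, hge,
              ← Matrix.mul_assoc]
    have hde : diagonal (fun i => (1:ℂ) - e i) = 1 - diagonal e := by
      rw [← diagonal_one, diagonal_sub]
    have hmain : (1 : Matrix N N ℂ) - U * diagonal e * star U
        = U * diagonal (fun i => 1 - e i) * Uᴴ := by
      rw [hde, Matrix.mul_sub, Matrix.sub_mul, Matrix.mul_one,
        ← star_eq_conjTranspose U, hUU']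
    rw [hWW, hmain]
    refine PosSemidef.mul_mul_conjTranspose_same (PosSemidef.diagonal ?_) U
    intro i
    by_cases hi : d i = 0 <;> simp [hedef, hi]



lemma matSqrt_eq {ι : Type*} [Fintype ι] [DecidableEq ι] {A : Matrix ι ι ℂ}
    (h : A.PosSemidef) : matSqrt A = h.sqrt := by
  exact dif_pos h

lemma trace_re_nonneg {N : Type*} [Fintype N] [DecidableEq N] {A : Matrix N N ℂ}
    (hA : A.PosSemidef) : 0 ≤ (Matrix.trace A).re := by
  rw [Matrix.trace, Complex.re_sum]
  refine Finset.sum_nonneg fun i _ => ?_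
  have := hA.re_dotProduct_nonneg (Pi.single i 1)
  simpa [dotProduct, Matrix.mulVec, Pi.single_apply] using this

lemma trace_mul_re_nonneg {N : Type*} [Fintype N] [DecidableEq N] {A B : Matrix N N ℂ}
    (hA : A.PosSemidef) (hB : B.PosSemidef) : 0 ≤ (Matrix.trace (A * B)).re := by
  have h1 : Matrix.trace (A * B) = Matrix.trace (hA.sqrtᴴ * B * hA.sqrt) := by
    rw [hA.posSemidef_sqrt.1]
    conv_rhs => rw [Matrix.trace_mul_comm, ← Matrix.mul_assoc, hA.sqrt_mul_self]
  rw [h1]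
  exact trace_re_nonneg (hB.conjTranspose_mul_mul_same _)

lemma trace_conj_eq {a b : Type*} [Fintype a] [Fintype b] (P Q : Matrix a b ℂ) :
    Matrix.trace (Pᴴ * Q) = ∑ p : b × a, (starRingEnd ℂ) (P p.2 p.1) * Q p.2 p.1 := by
  rw [Matrix.trace]
  simp only [Matrix.diag_apply, Matrix.mul_apply, Matrix.conjTranspose_apply,
    Complex.star_def]
  rw [Fintype.sum_prod_type]

lemma cs_trace {a b : Type*} [Fintype a] [Fintype b]
    (P Q : Matrix a b ℂ) :
    ‖Matrix.trace (Pᴴ * Q)‖ ^ 2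
      ≤ (Matrix.trace (Pᴴ * P)).re * (Matrix.trace (Qᴴ * Q)).re := by
  have hre : ∀ P : Matrix a b ℂ,
      (Matrix.trace (Pᴴ * P)).re = ∑ p : b × a, ‖P p.2 p.1‖ ^ 2 := by
    intro P
    rw [trace_conj_eq, Complex.re_sum]
    congr 1; funext p
    rw [show (starRingEnd ℂ) (P p.2 p.1) * P p.2 p.1 = ((Complex.normSq (P p.2 p.1) : ℝ) : ℂ) from
      by rw [mul_comm]; exact Complex.mul_conj _]
    rw [Complex.ofReal_re, Complex.sq_norm]
  rw [hre, hre]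
  calc ‖Matrix.trace (Pᴴ * Q)‖ ^ 2
      ≤ (∑ p : b × a, ‖P p.2 p.1‖ * ‖Q p.2 p.1‖) ^ 2 := by
        refine pow_le_pow_left₀ (norm_nonneg _) ?_ 2
        rw [trace_conj_eq]
        refine (norm_sum_le _ _).trans (le_of_eq ?_)
        congr 1; funext p
        rw [norm_mul, Complex.norm_conj]
    _ ≤ (∑ p : b × a, ‖P p.2 p.1‖ ^ 2) * ∑ p : b × a, ‖Q p.2 p.1‖ ^ 2 :=
        Finset.sum_mul_sq_le_sq_mul_sq _ _ _


/-- The `⇒` direction of Theorem 5 of the paper: identifying unit vectors of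
`ℂⁿ ⊗ ℂᵐ` with `n×m` matrices `X, Y` of unit Frobenius norm, if a quantum channel
on the second factor, given in Kraus form by operators `K i` with `∑ K iᴴ K i = 1`,
maps the state of `X` to within fidelity `1 − ε` of the pure state of `Y`
(this fidelity being `∑ i, |tr(Yᴴ X (K i)ᵀ)|²`), then the reduced states satisfy
`F(X·Xᴴ, Y·Yᴴ) ≥ 1 − ε`. -/
theorem stmt_13 (n m : ℕ) (hn : 1 ≤ n) (hm : 1 ≤ m)
    (X Y : Matrix (Fin n) (Fin m) ℂ)
    (hX : Matrix.trace (X * Xᴴ) = 1) (hY : Matrix.trace (Y * Yᴴ) = 1)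
    (ι : Type) [Fintype ι] (K : ι → Matrix (Fin m) (Fin m) ℂ)
    (hK : ∑ i, (K i)ᴴ * (K i) = 1)
    (ε : ℝ) (hε : 0 ≤ ε)
    (h : 1 - ε ≤ ∑ i, ‖Matrix.trace (Yᴴ * X * (K i)ᵀ)‖ ^ 2) :
    1 - ε ≤ fidelity (X * Xᴴ) (Y * Yᴴ) := by
  have hρ : (X * Xᴴ).PosSemidef := posSemidef_self_mul_conjTranspose X
  set R : Matrix (Fin n) (Fin n) ℂ := matSqrt (X * Xᴴ) with hRdef
  have hR : R.PosSemidef := by rw [hRdef, matSqrt_eq hρ]; exact hρ.posSemidef_sqrt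
  have hR2 : R * R = X * Xᴴ := by rw [hRdef, matSqrt_eq hρ]; exact hρ.sqrt_mul_self
  have hRH : Rᴴ = R := hR.1
  obtain ⟨W, hW, hW1⟩ := exists_factor hR hR2
  set T : Matrix (Fin n) (Fin m) ℂ := R * Y with hTdef
  have hArg : R * (Y * Yᴴ) * R = T * Tᴴ := by
    rw [hTdef, conjTranspose_mul, hRH]; simp only [Matrix.mul_assoc]
  have hTT : (T * Tᴴ).PosSemidef := posSemidef_self_mul_conjTranspose T
  set S : Matrix (Fin n) (Fin n) ℂ := matSqrt (T * Tᴴ) with hSdef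
  have hS : S.PosSemidef := by rw [hSdef, matSqrt_eq hTT]; exact hTT.posSemidef_sqrt
  have hS2 : S * S = T * Tᴴ := by rw [hSdef, matSqrt_eq hTT]; exact hTT.sqrt_mul_self
  have hSH : Sᴴ = S := hS.1
  obtain ⟨V, hV, hV1⟩ := exists_factor hS hS2
  set Q : Matrix (Fin n) (Fin n) ℂ := matSqrt S with hQdef
  have hQ : Q.PosSemidef := by rw [hQdef, matSqrt_eq hS]; exact hS.posSemidef_sqrt
  have hQ2 : Q * Q = S := by rw [hQdef, matSqrt_eq hS]; exact hS.sqrt_mul_self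
  have hQH : Qᴴ = Q := hQ.1
  have hfid : fidelity (X * Xᴴ) (Y * Yᴴ) = (Matrix.trace S).re ^ 2 := by
    simp only [fidelity]
    rw [← hRdef, hArg, ← hSdef]
  rw [hfid]
  have hYRV : Yᴴ * R = Vᴴ * S := by
    have hc := congrArg conjTranspose hV
    rw [hTdef, conjTranspose_mul, conjTranspose_mul, hRH, hSH] at hc
    exact hc
  have hQQ : ∀ (Z : Matrix (Fin n) (Fin m) ℂ), (Q * Z)ᴴ * (Q * Z) = Zᴴ * (S * Z) := by
    intro Z
    rw [conjTranspose_mul, hQH]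
    calc Zᴴ * Q * (Q * Z) = Zᴴ * ((Q * Q) * Z) := by simp only [Matrix.mul_assoc]
      _ = Zᴴ * (S * Z) := by rw [hQ2]
  have hterm : ∀ i : ι, Yᴴ * X * (K i)ᵀ = (Q * V)ᴴ * (Q * (W * (K i)ᵀ)) := by
    intro i
    rw [hW]
    calc Yᴴ * (R * W) * (K i)ᵀ = (Yᴴ * R) * (W * (K i)ᵀ) := by simp only [Matrix.mul_assoc]
      _ = Vᴴ * S * (W * (K i)ᵀ) := by rw [hYRV]
      _ = (Q * V)ᴴ * (Q * (W * (K i)ᵀ)) := by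
          rw [conjTranspose_mul, hQH, ← hQ2]
          simp only [Matrix.mul_assoc]
  have key : ∀ i : ι, ‖Matrix.trace (Yᴴ * X * (K i)ᵀ)‖ ^ 2
      ≤ (Matrix.trace (Vᴴ * (S * V))).re
        * (Matrix.trace ((W * (K i)ᵀ)ᴴ * (S * (W * (K i)ᵀ)))).re := by
    intro i
    rw [hterm i, ← hQQ V, ← hQQ (W * (K i)ᵀ)]
    exact cs_trace _ _
  have hKsum : ∑ i : ι, (K i)ᵀ * ((K i)ᵀ)ᴴ = 1 := by
    have e : ∀ i : ι, (K i)ᵀ * ((K i)ᵀ)ᴴ = ((K i)ᴴ * (K i))ᵀ := by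
      intro i
      ext a b
      simp only [Matrix.mul_apply, Matrix.transpose_apply, Matrix.conjTranspose_apply]
      exact Finset.sum_congr rfl fun k _ => mul_comm _ _
    calc ∑ i : ι, (K i)ᵀ * ((K i)ᵀ)ᴴ = ∑ i : ι, ((K i)ᴴ * (K i))ᵀ :=
          Finset.sum_congr rfl fun i _ => e i
      _ = (∑ i : ι, (K i)ᴴ * (K i))ᵀ := by rw [transpose_sum]
      _ = 1 := by rw [hK, transpose_one]
  have hsum2 : ∑ i : ι, (Matrix.trace ((W * (K i)ᵀ)ᴴ * (S * (W * (K i)ᵀ)))).re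
      = (Matrix.trace (S * (W * Wᴴ))).re := by
    have e1 : ∀ i : ι, Matrix.trace ((W * (K i)ᵀ)ᴴ * (S * (W * (K i)ᵀ)))
        = Matrix.trace ((S * W) * ((K i)ᵀ * ((K i)ᵀ)ᴴ) * Wᴴ) := by
      intro i
      rw [Matrix.trace_mul_comm]
      congr 1
      rw [conjTranspose_mul]
      simp only [Matrix.mul_assoc]
    calc ∑ i : ι, (Matrix.trace ((W * (K i)ᵀ)ᴴ * (S * (W * (K i)ᵀ)))).re
        = (∑ i : ι, Matrix.trace ((S * W) * ((K i)ᵀ * ((K i)ᵀ)ᴴ) * Wᴴ)).re := by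
          rw [Complex.re_sum]
          exact Finset.sum_congr rfl fun i _ => by rw [e1]
      _ = (Matrix.trace ((S * W) * (∑ i : ι, (K i)ᵀ * ((K i)ᵀ)ᴴ) * Wᴴ)).re := by
          rw [← Matrix.trace_sum]
          congr 2
          rw [← Matrix.sum_mul, ← Matrix.mul_sum]
      _ = (Matrix.trace (S * (W * Wᴴ))).re := by
          rw [hKsum, Matrix.mul_one, Matrix.mul_assoc]
  have hbound : ∀ (p : ℕ) (Z : Matrix (Fin n) (Fin p) ℂ), (1 - Z * Zᴴ).PosSemidef →
      (Matrix.trace (S * (Z * Zᴴ))).re ≤ (Matrix.trace S).re := by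
    intro p Z hZ
    have e : Matrix.trace (S * (Z * Zᴴ)) = Matrix.trace S - Matrix.trace (S * (1 - Z * Zᴴ)) := by
      rw [Matrix.mul_sub, Matrix.mul_one, Matrix.trace_sub]
      ring
    rw [e, Complex.sub_re]
    have := trace_mul_re_nonneg hS hZ
    linarith
  have htrS : 0 ≤ (Matrix.trace S).re := trace_re_nonneg hS
  have haeq : Matrix.trace (Vᴴ * (S * V)) = Matrix.trace (S * (V * Vᴴ)) := by
    rw [Matrix.trace_mul_comm]
    congr 1
    simp only [Matrix.mul_assoc]
  have ha1 : (Matrix.trace (Vᴴ * (S * V))).re ≤ (Matrix.trace S).re := by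
    rw [haeq]; exact hbound m V hV1
  have ha0 : 0 ≤ (Matrix.trace (Vᴴ * (S * V))).re := by
    rw [haeq]; exact trace_mul_re_nonneg hS (posSemidef_self_mul_conjTranspose V)
  have hb1 : (Matrix.trace (S * (W * Wᴴ))).re ≤ (Matrix.trace S).re := hbound m W hW1
  have hb0 : 0 ≤ (Matrix.trace (S * (W * Wᴴ))).re :=
    trace_mul_re_nonneg hS (posSemidef_self_mul_conjTranspose W)
  calc 1 - ε ≤ ∑ i, ‖Matrix.trace (Yᴴ * X * (K i)ᵀ)‖ ^ 2 := h
    _ ≤ ∑ i : ι, (Matrix.trace (Vᴴ * (S * V))).re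
          * (Matrix.trace ((W * (K i)ᵀ)ᴴ * (S * (W * (K i)ᵀ)))).re :=
        Finset.sum_le_sum fun i _ => key i
    _ = (Matrix.trace (Vᴴ * (S * V))).re * (Matrix.trace (S * (W * Wᴴ))).re := by
        rw [← Finset.mul_sum, hsum2]
    _ ≤ (Matrix.trace S).re * (Matrix.trace S).re := mul_le_mul ha1 hb1 hb0 htrS
    _ = (Matrix.trace S).re ^ 2 := (sq _).symm
end
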